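/- arXiv:1504.02853 — 7 statements merged into one kernel-verified Lean document; each statement's English description precedes it below -/
import Mathlib

section
/- Let N ≥ 1 be an integer, let p satisfy 1 + 8/N < p, and additionally p < 1 + 8/(N-4) when N ≥ 5, and set s_c = N/2 - 4/(p-1). If Q : ℝ^N → ℝ is a Schwartz function solving Δ²Q + (2 - s_c)Q - |Q|^{p-1}Q = 0 on ℝ^N, then the following three identities hold: ∫|ΔQ|² dx = (N(p-1)/(4(p+1))) ∫|Q|^{p+1} dx, ∫|Q|² dx = ((p-1)/(2(p+1))) ∫|Q|^{p+1} dx, and E(Q) = ((N(p-1)-8)/(8(p+1))) ∫|Q|^{p+1} dx. -/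
/-!
With `c = 2 - s_c` and `G(t) = |t|^{p+1}/(p+1)` the equation reads `Δ²Q + cQ = G'(Q)`.
Testing it against `Q` gives the Nehari identity `∫|ΔQ|² + c∫Q² = ∫|Q|^{p+1}`. Testing it against
the dilation generator `x·∇Q` gives the Pohozaev identity
`(2 - N/2)∫|ΔQ|² = -N/(p+1) ∫|Q|^{p+1} + cN/2 ∫Q²`; it rests on the commutator
`Δ(x·∇Q) = 2ΔQ + x·∇ΔQ` and on `∫ (x·∇u) G'(u) = -N ∫ G(u)`, an integration by parts against the
coordinate functions. The bound on `p` gives `s_c < 2`, so `c ≠ 0`, and the two linear relations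
determine `∫|ΔQ|²` and `∫Q²` in terms of `∫|Q|^{p+1}`.
-/

open MeasureTheory

noncomputable section

/-- The Laplacian `Δu = ∑ j ∂²u/∂x_j²` of a function on `ℝ^N`. -/
def laplacian {N : ℕ} {F : Type*} [NormedAddCommGroup F] [NormedSpace ℝ F]
    (u : EuclideanSpace ℝ (Fin N) → F) (x : EuclideanSpace ℝ (Fin N)) : F :=
  ∑ j : Fin N,
    fderiv ℝ (fun y => fderiv ℝ u y (EuclideanSpace.single j 1)) x (EuclideanSpace.single j 1)

open SchwartzMap LineDeriv
open scoped Laplacian RealInnerProductSpace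

theorem hasDerivAt_abs_rpow_add_one_div {p : ℝ} (hp : 0 < p) (t : ℝ) :
    HasDerivAt (fun t => |t| ^ (p + 1) / (p + 1)) (|t| ^ (p - 1) * t) t := by
  refine ((hasDerivAt_abs_rpow t (by linarith : 1 < p + 1)).div_const (p + 1)).congr_deriv ?_
  rw [show p + 1 - 2 = p - 1 by ring]
  field_simp

theorem mul_abs_rpow_mul_self {p : ℝ} (hp : p + 1 ≠ 0) (t : ℝ) :
    t * (|t| ^ (p - 1) * t) = |t| ^ (p + 1) := by
  have h2 : p - 1 + ((2 : ℕ) : ℝ) = p + 1 := by push_cast; ring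
  rw [← h2, Real.rpow_add' (abs_nonneg t) (h2 ▸ hp), Real.rpow_natCast, sq_abs]
  ring

namespace SchwartzMap

section Bounds

variable {E : Type*} [NormedAddCommGroup E] [NormedSpace ℝ E]

theorem exists_norm_comp_le (v : 𝓢(E, ℝ)) {g : ℝ → ℝ} (hg : Continuous g) :
    ∃ C, ∀ x, ‖g (v x)‖ ≤ C := by
  set R := SchwartzMap.seminorm ℝ 0 0 v
  obtain ⟨C, hC⟩ := (isCompact_closedBall (0 : ℝ) R).exists_bound_of_continuousOn hg.continuousOn
  exact ⟨C, fun x => hC _ (mem_closedBall_zero_iff.2 (norm_le_seminorm ℝ v x))⟩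

theorem exists_norm_comp_le_mul_norm (v : 𝓢(E, ℝ)) {G G' : ℝ → ℝ}
    (hG : ∀ t, HasDerivAt G (G' t) t) (hG' : Continuous G') (hG0 : G 0 = 0) :
    ∃ C, ∀ x, ‖G (v x)‖ ≤ C * ‖v x‖ := by
  set R := SchwartzMap.seminorm ℝ 0 0 v
  obtain ⟨C, hC⟩ := (isCompact_closedBall (0 : ℝ) R).exists_bound_of_continuousOn hG'.continuousOn
  refine ⟨C, fun x => ?_⟩
  have hmvt := (convex_closedBall (0 : ℝ) R).norm_image_sub_le_of_norm_hasDerivWithin_le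
    (fun t _ => (hG t).hasDerivWithinAt) hC (Metric.mem_closedBall_self (apply_nonneg _ v))
    (mem_closedBall_zero_iff.2 (norm_le_seminorm ℝ v x))
  simpa [hG0] using hmvt

end Bounds

variable {E F : Type*} [NormedAddCommGroup E] [InnerProductSpace ℝ E]
  [NormedAddCommGroup F] [NormedSpace ℝ F]

theorem lineDerivOp_comm (f : 𝓢(E, F)) (v w : E) : ∂_{v} (∂_{w} f) = ∂_{w} (∂_{v} f) := by
  ext x
  have h (v w : E) : ∂_{v} (∂_{w} f) x = iteratedFDeriv ℝ 2 f x ![v, w] :=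
    iteratedLineDerivOp_eq_iteratedFDeriv (m := ![v, w])
  rw [h, h, iteratedFDeriv_two_apply, iteratedFDeriv_two_apply]
  exact (f.smooth 2).contDiffAt.isSymmSndFDerivAt
    (by simp [minSmoothness_of_isRCLikeNormedField]) v w

def innerMul (w : E) : 𝓢(E, F) →L[ℝ] 𝓢(E, F) :=
  smulLeftCLM F (fun x => ⟪w, x⟫)

theorem innerMul_apply (w : E) (f : 𝓢(E, F)) (x : E) : innerMul w f x = ⟪w, x⟫ • f x :=
  smulLeftCLM_apply_apply (innerSL ℝ w).hasTemperateGrowth f x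

theorem lineDerivOp_innerMul (v w : E) (f : 𝓢(E, F)) :
    ∂_{v} (innerMul w f) = ⟪w, v⟫ • f + innerMul w (∂_{v} f) := by
  ext x
  have hcoe : ⇑(innerMul w f) = ⇑(innerSL ℝ w) • ⇑f := funext (innerMul_apply w f)
  have hd := ((innerSL ℝ w).hasFDerivAt (x := x)).smul (f.hasFDerivAt x)
  rw [lineDerivOp_apply_eq_fderiv, hcoe, hd.fderiv]
  simp [innerMul_apply, lineDerivOp_apply_eq_fderiv, add_comm]

variable [FiniteDimensional ℝ E]

theorem lineDerivOp_laplacian (f : 𝓢(E, F)) (v : E) : ∂_{v} (Δ f) = Δ (∂_{v} f) := by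
  simp only [laplacian_eq_sum (stdOrthonormalBasis ℝ E), lineDerivOp_sum, lineDerivOp_comm _ v]

theorem laplacian_innerMul (w : E) (f : 𝓢(E, F)) :
    Δ (innerMul w f) = (2 : ℝ) • ∂_{w} f + innerMul w (Δ f) := by
  set b := stdOrthonormalBasis ℝ E
  have hw : ∑ i, ⟪w, b i⟫ • ∂_{b i} f = ∂_{w} f := by
    simp_rw [← lineDerivOp_left_smul, ← lineDerivOp_left_sum, ← real_inner_comm w, b.sum_repr']
  simp only [laplacian_eq_sum b, lineDerivOp_innerMul, lineDerivOp_add, lineDerivOp_smul, map_sum,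
    Finset.sum_add_distrib, hw, two_smul, add_assoc]

/-- The dilation generator `x · ∇f`, that is `x ↦ Df(x) x`, written in an orthonormal basis. -/
def eulerOp (f : 𝓢(E, F)) : 𝓢(E, F) :=
  ∑ i, innerMul (stdOrthonormalBasis ℝ E i) (∂_{stdOrthonormalBasis ℝ E i} f)

theorem eulerOp_apply (f : 𝓢(E, F)) (x : E) :
    eulerOp f x = ∑ i, ⟪stdOrthonormalBasis ℝ E i, x⟫ • ∂_{stdOrthonormalBasis ℝ E i} f x := by
  simp [eulerOp, sum_apply, innerMul_apply]

theorem laplacian_eulerOp (f : 𝓢(E, F)) : Δ (eulerOp f) = (2 : ℝ) • Δ f + eulerOp (Δ f) := by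
  simp only [eulerOp, ← laplacianCLM_eq', map_sum]
  simp only [laplacianCLM_eq', laplacian_innerMul, Finset.sum_add_distrib, ← Finset.smul_sum,
    ← lineDerivOp_laplacian, ← laplacian_eq_sum]

section Integrals

variable [MeasurableSpace E] [BorelSpace E] {μ : Measure E} [μ.IsAddHaarMeasure]
  {G G' : ℝ → ℝ}

theorem integrable_mul_comp (u v : 𝓢(E, ℝ)) {g : ℝ → ℝ} (hg : Continuous g) :
    Integrable (fun x => u x * g (v x)) μ := by
  obtain ⟨C, hC⟩ := exists_norm_comp_le v hg
  exact u.integrable.mul_bdd (hg.comp v.continuous).aestronglyMeasurable (ae_of_all _ hC)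

theorem integrable_sq (u : 𝓢(E, ℝ)) : Integrable (fun x => u x ^ 2) μ :=
  (integrable_mul_comp u u continuous_id).congr (ae_of_all _ fun x => (sq (u x)).symm)

theorem integral_inner_mul_lineDerivOp_mul_comp (u : 𝓢(E, ℝ)) (w v : E)
    (hG : ∀ t, HasDerivAt G (G' t) t) (hG' : Continuous G') (hG0 : G 0 = 0) :
    ∫ x, ⟪w, x⟫ * (∂_{v} u x * G' (u x)) ∂μ = -(⟪w, v⟫ * ∫ x, G (u x) ∂μ) := by
  have hGu (x : E) : HasFDerivAt (fun y => G (u y)) (G' (u x) • fderiv ℝ u x) x :=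
    (hG (u x)).comp_hasFDerivAt x (u.hasFDerivAt x)
  have hderiv (x : E) : fderiv ℝ (fun y => G (u y)) x v = ∂_{v} u x * G' (u x) := by
    simp [(hGu x).fderiv, lineDerivOp_apply_eq_fderiv, mul_comm]
  have hinner (x : E) : fderiv ℝ (fun y => ⟪w, y⟫) x v = ⟪w, v⟫ :=
    congrArg (· v) ((innerSL ℝ w).hasFDerivAt (x := x)).fderiv
  obtain ⟨C, hC⟩ := exists_norm_comp_le_mul_norm u hG hG' hG0
  have hcont : Continuous (fun x => G (u x)) :=
    (continuous_iff_continuousAt.2 fun t => (hG t).continuousAt).comp u.continuous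
  have hGint : Integrable (fun x => G (u x)) μ :=
    (u.integrable.norm.const_mul C).mono' hcont.aestronglyMeasurable (ae_of_all _ hC)
  have hwGint : Integrable (fun x => ⟪w, x⟫ * G (u x)) μ := by
    refine ((innerMul w u).integrable.norm.const_mul C).mono'
      ((innerSL ℝ w).continuous.mul hcont).aestronglyMeasurable (ae_of_all _ fun x => ?_)
    rw [norm_mul, innerMul_apply, norm_smul, mul_left_comm]
    exact mul_le_mul_of_nonneg_left (hC x) (norm_nonneg _)
  have hwDGint : Integrable (fun x => ⟪w, x⟫ * (∂_{v} u x * G' (u x))) μ := by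
    refine (integrable_mul_comp (innerMul w (∂_{v} u)) u hG').congr (ae_of_all _ fun x => ?_)
    simp [innerMul_apply, mul_assoc]
  have hibp := integral_mul_fderiv_eq_neg_fderiv_mul_of_integrable (μ := μ) (v := v)
    (f := fun x => ⟪w, x⟫) (g := fun x => G (u x))
    (by simpa only [hinner] using hGint.const_mul ⟪w, v⟫) (by simpa only [hderiv] using hwDGint)
    hwGint (fun x _ => (innerSL ℝ w).differentiableAt) (fun x _ => (hGu x).differentiableAt)
  simp only [hinner, hderiv] at hibp
  rw [hibp, integral_const_mul]

theorem integral_eulerOp_mul_comp (u : 𝓢(E, ℝ)) (hG : ∀ t, HasDerivAt G (G' t) t)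
    (hG' : Continuous G') (hG0 : G 0 = 0) :
    ∫ x, eulerOp u x * G' (u x) ∂μ = -(Module.finrank ℝ E * ∫ x, G (u x) ∂μ) := by
  set b := stdOrthonormalBasis ℝ E
  have hsum (x : E) : eulerOp u x * G' (u x) = ∑ i, ⟪b i, x⟫ * (∂_{b i} u x * G' (u x)) := by
    simp only [eulerOp_apply, smul_eq_mul, Finset.sum_mul, mul_assoc]
    rfl
  have hint (i) : Integrable (fun x => ⟪b i, x⟫ * (∂_{b i} u x * G' (u x))) μ := by
    refine (integrable_mul_comp (innerMul (b i) (∂_{b i} u)) u hG').congr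
      (ae_of_all _ fun x => ?_)
    simp [innerMul_apply, mul_assoc]
  simp only [hsum, integral_finsetSum _ fun i _ => hint i,
    integral_inner_mul_lineDerivOp_mul_comp u _ _ hG hG' hG0,
    inner_self_eq_one_of_norm_eq_one (b.orthonormal.1 _)]
  simp

theorem integral_eulerOp_mul_self (u : 𝓢(E, ℝ)) :
    ∫ x, eulerOp u x * u x ∂μ = -(Module.finrank ℝ E / 2 * ∫ x, u x ^ 2 ∂μ) := by
  have hG (t : ℝ) : HasDerivAt (fun t => t ^ 2 / 2) t t := by
    simpa using (hasDerivAt_pow 2 t).div_const 2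
  rw [integral_eulerOp_mul_comp u hG continuous_id (by simp), integral_div]
  ring

theorem integral_eulerOp_mul_laplacian_laplacian (f : 𝓢(E, ℝ)) :
    ∫ x, eulerOp f x * Δ (Δ f) x ∂μ = (2 - Module.finrank ℝ E / 2) * ∫ x, Δ f x ^ 2 ∂μ := by
  calc ∫ x, eulerOp f x * Δ (Δ f) x ∂μ = ∫ x, Δ (eulerOp f) x * Δ f x ∂μ :=
        integral_mul_laplacian_right_eq_left _ _
    _ = ∫ x, (2 * Δ f x ^ 2 + eulerOp (Δ f) x * Δ f x) ∂μ := by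
        congr 1 with x
        simp only [laplacian_eulerOp, add_apply, smul_apply, smul_eq_mul]
        ring
    _ = 2 * ∫ x, Δ f x ^ 2 ∂μ + ∫ x, eulerOp (Δ f) x * Δ f x ∂μ := by
        rw [integral_add, integral_const_mul]
        · exact (integrable_sq _).const_mul 2
        · exact integrable_mul_comp (eulerOp (Δ f)) (Δ f) continuous_id
    _ = (2 - Module.finrank ℝ E / 2) * ∫ x, Δ f x ^ 2 ∂μ := by
        rw [integral_eulerOp_mul_self]
        ring

variable (c : ℝ)

theorem nehari_identity_of_bilaplacian_eq (u : 𝓢(E, ℝ)) (hG' : Continuous G')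
    (hu : ∀ x, Δ (Δ u) x + c * u x = G' (u x)) :
    ∫ x, Δ u x ^ 2 ∂μ = ∫ x, u x * G' (u x) ∂μ - c * ∫ x, u x ^ 2 ∂μ := by
  calc ∫ x, Δ u x ^ 2 ∂μ = ∫ x, u x * Δ (Δ u) x ∂μ := by
        simp only [integral_mul_laplacian_right_eq_left, sq]
    _ = ∫ x, (u x * G' (u x) - c * u x ^ 2) ∂μ := by
        congr 1 with x
        rw [← hu x]
        ring
    _ = ∫ x, u x * G' (u x) ∂μ - c * ∫ x, u x ^ 2 ∂μ := by
        rw [integral_sub, integral_const_mul]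
        · exact integrable_mul_comp u u hG'
        · exact (integrable_sq u).const_mul c

theorem pohozaev_identity_of_bilaplacian_eq (u : 𝓢(E, ℝ)) (hG : ∀ t, HasDerivAt G (G' t) t)
    (hG' : Continuous G') (hG0 : G 0 = 0) (hu : ∀ x, Δ (Δ u) x + c * u x = G' (u x)) :
    (2 - Module.finrank ℝ E / 2) * ∫ x, Δ u x ^ 2 ∂μ
      = -(Module.finrank ℝ E * ∫ x, G (u x) ∂μ)
        + c * (Module.finrank ℝ E / 2) * ∫ x, u x ^ 2 ∂μ := by
  calc (2 - Module.finrank ℝ E / 2) * ∫ x, Δ u x ^ 2 ∂μ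
        = ∫ x, (eulerOp u x * G' (u x) - c * (eulerOp u x * u x)) ∂μ := by
        rw [← integral_eulerOp_mul_laplacian_laplacian]
        congr 1 with x
        rw [← hu x]
        ring
    _ = _ := by
        rw [integral_sub, integral_const_mul, integral_eulerOp_mul_comp u hG hG' hG0,
          integral_eulerOp_mul_self]
        · ring
        · exact integrable_mul_comp _ u hG'
        · exact (integrable_mul_comp _ u continuous_id).const_mul c

end Integrals

end SchwartzMap

theorem laplacian_schwartzMap {N : ℕ} {F : Type*} [NormedAddCommGroup F] [NormedSpace ℝ F]
    (f : 𝓢(EuclideanSpace ℝ (Fin N), F)) :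
    laplacian ⇑f = ⇑(Δ f : 𝓢(EuclideanSpace ℝ (Fin N), F)) := by
  have hderiv (v : EuclideanSpace ℝ (Fin N)) :
      ⇑(∂_{v} f : 𝓢(EuclideanSpace ℝ (Fin N), F)) = fun y => fderiv ℝ f y v :=
    funext (lineDerivOp_apply_eq_fderiv v f)
  ext x
  simp [laplacian, laplacian_eq_sum (EuclideanSpace.basisFun (Fin N) ℝ), sum_apply,
    lineDerivOp_apply_eq_fderiv, hderiv]

theorem critical_index_lt_two {N : ℕ} {p : ℝ} (hp : 1 < p)
    (hp2 : 5 ≤ N → p < 1 + 8 / ((N : ℝ) - 4)) : (N : ℝ) / 2 - 4 / (p - 1) < 2 := by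
  have h4 : 0 < 4 / (p - 1) := div_pos four_pos (sub_pos.2 hp)
  rcases le_or_gt 5 N with hN | hN
  · have hN4 : (0 : ℝ) < N - 4 := by
      have : (5 : ℝ) ≤ N := by exact_mod_cast hN
      linarith
    have h := (lt_div_iff₀ hN4).1 (sub_lt_iff_lt_add'.2 (hp2 hN))
    rw [sub_lt_iff_lt_add, ← sub_lt_iff_lt_add', lt_div_iff₀ (sub_pos.2 hp)]
    linarith
  · have : (N : ℝ) ≤ 4 := by exact_mod_cast Nat.lt_succ_iff.1 hN
    linarith

theorem ground_state_integrals_of_nehari_pohozaev {n p s A B C : ℝ} (hp : 1 < p)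
    (hc : 2 - s ≠ 0) (hs : s = n / 2 - 4 / (p - 1)) (hnehari : A = C - (2 - s) * B)
    (hpoh : (2 - n / 2) * A = -(n * (C / (p + 1))) + (2 - s) * (n / 2) * B) :
    A = n * (p - 1) / (4 * (p + 1)) * C ∧ B = (p - 1) / (2 * (p + 1)) * C ∧
      1 / 2 * A - 1 / (p + 1) * C = (n * (p - 1) - 8) / (8 * (p + 1)) * C := by
  have hp1 : p + 1 ≠ 0 := by linarith
  have hp1' : p - 1 ≠ 0 := by linarith
  have hA : A = n * (p - 1) / (4 * (p + 1)) * C := by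
    linear_combination (norm := skip) (1 / 2) * hpoh + (n / 4) * hnehari
    field_simp
    ring
  refine ⟨hA, mul_left_cancel₀ hc ?_, ?_⟩
  · linear_combination (norm := skip) hnehari - hA
    subst hs
    field_simp
    ring
  · rw [hA]
    field_simp
    ring

theorem ground_state_identities_general (N : ℕ) (p : ℝ)
    (hp1 : 1 + 8 / (N : ℝ) < p) (hp2 : 5 ≤ N → p < 1 + 8 / ((N : ℝ) - 4))
    (s_c : ℝ) (hs : s_c = (N : ℝ) / 2 - 4 / (p - 1))
    (Q : SchwartzMap (EuclideanSpace ℝ (Fin N)) ℝ)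
    (hQ : ∀ x, laplacian (laplacian (⇑Q)) x + (2 - s_c) * Q x - |Q x| ^ (p - 1) * Q x = 0) :
    (∫ x, |laplacian (⇑Q) x| ^ 2)
        = ((N : ℝ) * (p - 1) / (4 * (p + 1))) * ∫ x, |Q x| ^ (p + 1) ∧
    (∫ x, |Q x| ^ 2) = ((p - 1) / (2 * (p + 1))) * ∫ x, |Q x| ^ (p + 1) ∧
    (1 / 2) * (∫ x, |laplacian (⇑Q) x| ^ 2) - (1 / (p + 1)) * (∫ x, |Q x| ^ (p + 1))
        = (((N : ℝ) * (p - 1) - 8) / (8 * (p + 1))) * ∫ x, |Q x| ^ (p + 1) := by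
  have hp : 1 < p := lt_of_le_of_lt (le_add_of_nonneg_right (by positivity)) hp1
  have hG (t : ℝ) := hasDerivAt_abs_rpow_add_one_div (by linarith : 0 < p) t
  have hG' : Continuous fun t : ℝ => |t| ^ (p - 1) * t :=
    (continuous_abs.rpow_const fun _ => Or.inr (by linarith)).mul continuous_id
  have hG0 : |(0 : ℝ)| ^ (p + 1) / (p + 1) = 0 := by
    simp [Real.zero_rpow (by linarith : p + 1 ≠ 0)]
  have hu (x) : Δ (Δ Q) x + (2 - s_c) * Q x = |Q x| ^ (p - 1) * Q x := by
    have := hQ x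
    rw [laplacian_schwartzMap, laplacian_schwartzMap] at this
    linarith
  have hnehari := nehari_identity_of_bilaplacian_eq (μ := volume) _ Q hG' hu
  have hpoh := pohozaev_identity_of_bilaplacian_eq (μ := volume) _ Q hG hG' hG0 hu
  simp only [mul_abs_rpow_mul_self (by linarith : p + 1 ≠ 0), integral_div,
    finrank_euclideanSpace_fin] at hnehari hpoh
  simp only [laplacian_schwartzMap, sq_abs]
  exact ground_state_integrals_of_nehari_pohozaev hp
    (sub_pos.2 (hs ▸ critical_index_lt_two hp hp2)).ne' hs hnehari hpoh

/-- For the ground state `Q` of `Δ²Q + (2 - s_c)Q - |Q|^{p-1}Q = 0`: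
`∫|ΔQ|² = (N(p-1)/(4(p+1)))∫|Q|^{p+1}`, `∫|Q|² = ((p-1)/(2(p+1)))∫|Q|^{p+1}`, and
`E(Q) = ((N(p-1)-8)/(8(p+1)))∫|Q|^{p+1}`. -/
theorem ground_state_identities (N : ℕ) (hN : 1 ≤ N) (p : ℝ)
    (hp1 : 1 + 8 / (N : ℝ) < p) (hp2 : 5 ≤ N → p < 1 + 8 / ((N : ℝ) - 4))
    (s_c : ℝ) (hs : s_c = (N : ℝ) / 2 - 4 / (p - 1))
    (Q : SchwartzMap (EuclideanSpace ℝ (Fin N)) ℝ)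
    (hQ : ∀ x, laplacian (laplacian (⇑Q)) x + (2 - s_c) * Q x - |Q x| ^ (p - 1) * Q x = 0) :
    (∫ x, |laplacian (⇑Q) x| ^ 2)
        = ((N : ℝ) * (p - 1) / (4 * (p + 1))) * ∫ x, |Q x| ^ (p + 1) ∧
    (∫ x, |Q x| ^ 2) = ((p - 1) / (2 * (p + 1))) * ∫ x, |Q x| ^ (p + 1) ∧
    (1 / 2) * (∫ x, |laplacian (⇑Q) x| ^ 2) - (1 / (p + 1)) * (∫ x, |Q x| ^ (p + 1))
        = (((N : ℝ) * (p - 1) - 8) / (8 * (p + 1))) * ∫ x, |Q x| ^ (p + 1) :=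
  ground_state_identities_general N p hp1 hp2 s_c hs Q hQ
end
end

section
/- Let N ≥ 1 be an integer, let p satisfy 1 + 8/N < p, and additionally p < 1 + 8/(N-4) when N ≥ 5, and set s_c = N/2 - 4/(p-1). Let Q : ℝ^N → ℝ be a nonzero Schwartz function solving Δ²Q + (2 - s_c)Q - |Q|^{p-1}Q = 0. Define C_GN := (4(p+1)/(N(p-1))) ‖Q‖_2^{-(p+1-N(p-1)/4)} ‖ΔQ‖_2^{-(N(p-1)/4 - 2)}, the function f(x) := x²/2 - (C_GN/(p+1)) x^{N(p-1)/4} for x ≥ 0, and x₁ := ‖Q‖_2^{(2-s_c)/s_c} ‖ΔQ‖_2. Then f'(x₁) = 0 and f(x₁) = M(Q)^{(2-s_c)/s_c} E(Q) = ((N(p-1)-8)/(2N(p-1))) x₁². -/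
open MeasureTheory

noncomputable section

/-!
Testing the equation against `Q` gives `‖ΔQ‖₂² + (2 - s_c)‖Q‖₂² = ‖Q‖_{p+1}^{p+1}`. Testing it
against the dilation generator `x · ∇Q`, and using `Δ(x · ∇g) = x · ∇(Δg) + 2Δg` together with
`∫ |g|^{p-1} g (x · ∇g) = -N/(p+1) ∫ |g|^{p+1}` (integrate `x · ∇` by parts, `div x = N`), gives
the Pohozaev identity `N(p-1)‖Q‖_{p+1}^{p+1} = 4(p+1)‖ΔQ‖₂²`.

With `σ = N(p-1)/4` and `β = (2-s_c)/s_c`, which satisfy `β(σ-2) = p+1-σ`, the constant `C_GN`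
is exactly the one with `(C_GN/(p+1)) x₁^σ = x₁²/σ`. Hence `f'(x₁) = x₁ - σ x₁²/(σ x₁) = 0`
and `f(x₁) = (1/2 - 1/σ) x₁²`, while `x₁² = M(Q)^β ‖ΔQ‖₂²` and the Pohozaev identity turn
`M(Q)^β E(Q)` into the same quantity.
-/

open scoped SchwartzMap LineDeriv Laplacian

theorem abs_rpow_sub_one_mul_abs {p : ℝ} (hp : p ≠ 0) (t : ℝ) :
    |t| ^ (p - 1) * |t| = |t| ^ p := by
  rw [← Real.rpow_add_one' (abs_nonneg t) (by simpa using hp), sub_add_cancel]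

theorem abs_abs_rpow_sub_one_mul_self {p : ℝ} (hp : p ≠ 0) (t : ℝ) :
    |(|t| ^ (p - 1) * t)| = |t| ^ p := by
  rw [abs_mul, abs_of_nonneg (by positivity), abs_rpow_sub_one_mul_abs hp]

theorem abs_rpow_sub_one_mul_self_mul_self {p : ℝ} (hp : 0 < p) (t : ℝ) :
    |t| ^ (p - 1) * t * t = |t| ^ (p + 1) := by
  rw [mul_assoc, ← abs_mul_abs_self, ← mul_assoc, abs_rpow_sub_one_mul_abs hp.ne',
    ← Real.rpow_add_one' (abs_nonneg t) (by linarith)]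

theorem hasDerivAt_abs_rpow_add_one {p : ℝ} (hp : 0 < p) (t : ℝ) :
    HasDerivAt (fun t : ℝ => |t| ^ (p + 1)) ((p + 1) * (|t| ^ (p - 1) * t)) t := by
  convert hasDerivAt_abs_rpow t (p := p + 1) (by linarith) using 1
  ring_nf

section Integration

variable {E : Type*} [NormedAddCommGroup E] [InnerProductSpace ℝ E] [FiniteDimensional ℝ E]
  [MeasurableSpace E] [BorelSpace E] {μ : Measure E} [μ.IsAddHaarMeasure]

theorem integral_fderiv_apply_self {G : E → ℝ} (hG : Differentiable ℝ G)
    (hGi : Integrable G μ) (hxG : Integrable (fun x => ‖x‖ * G x) μ)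
    (hxDG : Integrable (fun x => ‖x‖ * ‖fderiv ℝ G x‖) μ) :
    ∫ x, fderiv ℝ G x x ∂μ = -(Module.finrank ℝ E) * ∫ x, G x ∂μ := by
  set b := stdOrthonormalBasis ℝ E
  have hinner : ∀ i x, ‖inner ℝ (b i) x‖ ≤ ‖x‖ := fun i x => by
    simpa [b.orthonormal.1 i] using norm_inner_le_norm (𝕜 := ℝ) (b i) x
  have hexpand : ∀ x, fderiv ℝ G x x = ∑ i, inner ℝ (b i) x * fderiv ℝ G x (b i) := by
    intro x
    simpa [map_sum, map_smul] using congrArg (fderiv ℝ G x) (b.sum_repr' x).symm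
  have hcoord_int : ∀ i, Integrable (fun x => inner ℝ (b i) x * fderiv ℝ G x (b i)) μ := by
    intro i
    refine hxDG.mono' (((innerSL ℝ (b i)).continuous.measurable.mul
      (measurable_fderiv_apply_const ℝ G (b i))).aestronglyMeasurable) (ae_of_all _ fun x => ?_)
    rw [norm_mul]
    gcongr
    · exact hinner i x
    · simpa [b.orthonormal.1 i] using (fderiv ℝ G x).le_opNorm (b i)
  have hcoord : ∀ i, ∫ x, inner ℝ (b i) x * fderiv ℝ G x (b i) ∂μ = -∫ x, G x ∂μ := by
    intro i
    have hderiv : ∀ x, fderiv ℝ (fun y => inner ℝ (b i) y) x (b i) = 1 := by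
      intro x
      rw [show (fun y => inner ℝ (b i) y) = ⇑(innerSL ℝ (b i)) from rfl,
        ContinuousLinearMap.fderiv]
      simp [b.orthonormal.1 i]
    have hxG' : Integrable (fun x => inner ℝ (b i) x * G x) μ := by
      refine hxG.norm.mono' ((innerSL ℝ (b i)).continuous.mul hG.continuous).aestronglyMeasurable
        (ae_of_all _ fun x => ?_)
      rw [norm_mul, norm_mul, norm_norm]
      gcongr
      exact hinner i x
    rw [integral_mul_fderiv_eq_neg_fderiv_mul_of_integrable (by simpa [hderiv] using hGi)
      (hcoord_int i) hxG' (fun x _ => (innerSL ℝ (b i)).differentiableAt) (fun x _ => hG x)]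
    simp [hderiv]
  simp_rw [hexpand]
  rw [integral_finsetSum _ fun i _ => hcoord_int i]
  simp [hcoord]

end Integration

namespace SchwartzMap

theorem integrable_abs_rpow_mul {E : Type*} [NormedAddCommGroup E] [NormedSpace ℝ E]
    [MeasurableSpace E] [OpensMeasurableSpace E] {μ : Measure E} (g : 𝓢(E, ℝ)) {p : ℝ}
    (hp : 0 ≤ p) {φ : E → ℝ} (hφ : Integrable φ μ) :
    Integrable (fun x => |g x| ^ p * φ x) μ := by
  refine hφ.bdd_mul (c := SchwartzMap.seminorm ℝ 0 0 g ^ p)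
    ((continuous_abs.comp g.continuous).rpow_const fun _ => Or.inr hp).aestronglyMeasurable
    (ae_of_all _ fun x => ?_)
  rw [Real.norm_eq_abs, abs_of_nonneg (by positivity)]
  exact Real.rpow_le_rpow (abs_nonneg _) (g.norm_le_seminorm ℝ x) hp

section Euler

variable {E F : Type*} [NormedAddCommGroup E] [NormedSpace ℝ E]
  [NormedAddCommGroup F] [NormedSpace ℝ F]

/-- The Euler operator `f ↦ x · ∇f`, the generator of the dilations `f ↦ f (λ •)`. -/
def euler : 𝓢(E, F) →L[ℝ] 𝓢(E, F) :=
  bilinLeftCLM (ContinuousLinearMap.apply ℝ F).flip Function.HasTemperateGrowth.id ∘L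
    fderivCLM ℝ E F

theorem euler_apply (f : 𝓢(E, F)) (x : E) : euler f x = fderiv ℝ f x x := rfl

theorem lineDerivOp_euler (v : E) (f : 𝓢(E, F)) :
    ∂_{v} (euler f) = ∂_{v} f + euler (∂_{v} f) := by
  ext x
  have hf' : HasFDerivAt (fderiv ℝ f) (fderiv ℝ (fderiv ℝ f) x) x :=
    (((f.smooth 2).fderiv_right (m := 1) (by norm_num)).differentiable
      (by norm_num) x).hasFDerivAt
  have hD : HasFDerivAt (fun y => fderiv ℝ f y y)
      ((fderiv ℝ (fderiv ℝ f) x).flip x + fderiv ℝ f x) x := by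
    simpa [add_comm] using hf'.clm_apply (hasFDerivAt_id x)
  have hv : HasFDerivAt (fun y => fderiv ℝ f y v) ((fderiv ℝ (fderiv ℝ f) x).flip v) x := by
    simpa using hf'.clm_apply (hasFDerivAt_const v x)
  have hsymm : IsSymmSndFDerivAt ℝ f x :=
    (f.smooth 2).contDiffAt.isSymmSndFDerivAt (by simp)
  have hcoe : ⇑(∂_{v} f : 𝓢(E, F)) = fun y => fderiv ℝ f y v :=
    funext (lineDerivOp_apply_eq_fderiv v f)
  simp only [lineDerivOp_apply_eq_fderiv, add_apply, euler_apply]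
  rw [show ⇑(euler f) = fun y => fderiv ℝ f y y from rfl, hD.fderiv, hcoe, hv.fderiv]
  simp [hsymm.eq, add_comm]

end Euler

theorem laplacian_euler {E F : Type*} [NormedAddCommGroup E] [InnerProductSpace ℝ E]
    [FiniteDimensional ℝ E] [NormedAddCommGroup F] [NormedSpace ℝ F] (f : 𝓢(E, F)) :
    Δ (euler f) = (2 : ℝ) • Δ f + euler (Δ f) := by
  simp only [laplacian_eq_sum (stdOrthonormalBasis ℝ E), lineDerivOp_euler,
    LineDeriv.lineDerivOp_add, map_sum, Finset.smul_sum, ← Finset.sum_add_distrib]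
  refine Finset.sum_congr rfl fun i _ => ?_
  rw [two_smul]
  abel

section Integrals

variable {E : Type*} [NormedAddCommGroup E] [InnerProductSpace ℝ E] [FiniteDimensional ℝ E]
  [MeasurableSpace E] [BorelSpace E] {μ : Measure E} [μ.IsAddHaarMeasure]

theorem integrable_abs_rpow_sub_one_mul_self_mul (g h : 𝓢(E, ℝ)) {p : ℝ} (hp : 1 ≤ p) :
    Integrable (fun x => |g x| ^ (p - 1) * g x * h x) μ := by
  refine (g.integrable_abs_rpow_mul (by linarith) h.integrable.norm).mono'
    ((((continuous_abs.comp g.continuous).rpow_const fun _ => Or.inr (by linarith)).mul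
      g.continuous).mul h.continuous).aestronglyMeasurable (ae_of_all _ fun x => ?_)
  rw [norm_mul, Real.norm_eq_abs, abs_abs_rpow_sub_one_mul_self (by linarith)]

theorem integral_abs_rpow_sub_one_mul_self_mul_euler (g : 𝓢(E, ℝ)) {p : ℝ} (hp : 1 ≤ p) :
    ∫ x, |g x| ^ (p - 1) * g x * euler g x ∂μ
      = -(Module.finrank ℝ E / (p + 1)) * ∫ x, |g x| ^ (p + 1) ∂μ := by
  have hG : ∀ x, HasFDerivAt (fun y => |g y| ^ (p + 1))
      (((p + 1) * (|g x| ^ (p - 1) * g x)) • fderiv ℝ g x) x := fun x =>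
    (hasDerivAt_abs_rpow_add_one (by linarith) (g x)).comp_hasFDerivAt x
      (g.differentiableAt.hasFDerivAt)
  have hG_eq : ∀ x, |g x| ^ (p + 1) = |g x| ^ p * |g x| := fun x =>
    Real.rpow_add_one' (abs_nonneg _) (by linarith)
  have hxDG : Integrable (fun x => ‖x‖ * ‖fderiv ℝ (fun y => |g y| ^ (p + 1)) x‖) μ := by
    refine ((g.integrable_abs_rpow_mul (by linarith)
      ((fderivCLM ℝ E ℝ g).integrable_pow_mul μ 1)).const_mul (p + 1)).congr
      (ae_of_all _ fun x => ?_)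
    dsimp only
    rw [(hG x).fderiv, norm_smul, norm_mul]
    simp only [Real.norm_eq_abs, abs_abs_rpow_sub_one_mul_self (by linarith : p ≠ 0),
      abs_of_pos (by linarith : 0 < p + 1), fderivCLM_apply, pow_one]
    ring
  have key := integral_fderiv_apply_self (μ := μ) (fun x => (hG x).differentiableAt)
    (by simpa [hG_eq] using g.integrable_abs_rpow_mul (μ := μ) (by linarith) g.integrable.norm)
    (by simpa [hG_eq, mul_left_comm] using
      g.integrable_abs_rpow_mul (μ := μ) (by linarith) (g.integrable_pow_mul μ 1)) hxDG
  simp only [fun x => (hG x).fderiv, FunLike.coe_smul, Pi.smul_apply, smul_eq_mul,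
    mul_assoc, integral_const_mul] at key
  have hp1 : p + 1 ≠ 0 := by linarith
  calc ∫ x, |g x| ^ (p - 1) * g x * euler g x ∂μ
      = (p + 1)⁻¹ * ((p + 1) * ∫ x, |g x| ^ (p - 1) * (g x * fderiv ℝ g x x) ∂μ) := by
        simp_rw [inv_mul_cancel_left₀ hp1, euler_apply, mul_assoc]
    _ = _ := by rw [key]; ring

theorem integrable_mul (g h : 𝓢(E, ℝ)) : Integrable (fun x => g x * h x) μ :=
  (pairing (ContinuousLinearMap.mul ℝ ℝ) g h).integrable

theorem integral_mul_euler_self (g : 𝓢(E, ℝ)) :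
    ∫ x, g x * euler g x ∂μ = -(Module.finrank ℝ E / 2) * ∫ x, g x ^ 2 ∂μ := by
  simpa [Real.rpow_two, one_add_one_eq_two] using
    integral_abs_rpow_sub_one_mul_self_mul_euler (μ := μ) g le_rfl

theorem integral_laplacian_laplacian_mul_euler (f : 𝓢(E, ℝ)) :
    ∫ x, Δ (Δ f) x * euler f x ∂μ = (2 - Module.finrank ℝ E / 2) * ∫ x, Δ f x ^ 2 ∂μ := by
  rw [← integral_mul_laplacian_right_eq_left, laplacian_euler]
  simp only [add_apply, smul_apply, smul_eq_mul, mul_add]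
  rw [integral_add ((integrable_mul (Δ f) (Δ f)).const_mul 2 |>.congr
    (ae_of_all _ fun x => by ring)) (integrable_mul _ _), integral_mul_euler_self,
    show ∫ x, Δ f x * (2 * Δ f x) ∂μ = 2 * ∫ x, Δ f x ^ 2 ∂μ by
      rw [← integral_const_mul]; congr with x; ring]
  ring

theorem pohozaev_identity (Q : 𝓢(E, ℝ)) {c p : ℝ} (hp : 1 ≤ p)
    (hQ : ∀ x, Δ (Δ Q) x + c * Q x - |Q x| ^ (p - 1) * Q x = 0) :
    Module.finrank ℝ E * (p - 1) * ∫ x, |Q x| ^ (p + 1) ∂μ = 4 * (p + 1) * ∫ x, Δ Q x ^ 2 ∂μ := by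
  have hsplit : ∀ h : 𝓢(E, ℝ), ∫ x, Δ (Δ Q) x * h x ∂μ
      = ∫ x, |Q x| ^ (p - 1) * Q x * h x ∂μ - c * ∫ x, Q x * h x ∂μ := by
    intro h
    rw [← integral_const_mul, ← integral_sub (integrable_abs_rpow_sub_one_mul_self_mul Q h hp)
      ((integrable_mul Q h).const_mul c)]
    exact integral_congr_ae (ae_of_all _ fun x => by linear_combination h x * hQ x)
  have hQ_test := hsplit Q
  have heuler_test := hsplit (euler Q)
  rw [← integral_mul_laplacian_right_eq_left] at hQ_test
  simp only [abs_rpow_sub_one_mul_self_mul_self (by linarith : 0 < p), ← sq] at hQ_test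
  rw [integral_laplacian_laplacian_mul_euler, integral_abs_rpow_sub_one_mul_self_mul_euler Q hp,
    integral_mul_euler_self] at heuler_test
  have hp1 : p + 1 ≠ 0 := by linarith
  field_simp at heuler_test
  linear_combination (-1 : ℝ) * heuler_test - Module.finrank ℝ E * (p + 1) * hQ_test

theorem integral_abs_rpow_pos {g : 𝓢(E, ℝ)} (hg : g ≠ 0) {p : ℝ} (hp : 1 ≤ p) :
    0 < ∫ x, |g x| ^ p ∂μ := by
  obtain ⟨x₀, hx₀⟩ : ∃ x, g x ≠ 0 := by
    by_contra! h
    exact hg (ext h)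
  refine integral_pos_of_integrable_nonneg_nonzero (x := x₀)
    ((continuous_abs.comp g.continuous).rpow_const fun _ => Or.inr (by linarith)) ?_
    (fun x => by positivity) (Real.rpow_pos_of_pos (abs_pos.2 hx₀) p).ne'
  simpa [abs_rpow_sub_one_mul_abs (by linarith : p ≠ 0)] using
    g.integrable_abs_rpow_mul (μ := μ) (by linarith : 0 ≤ p - 1) g.integrable.norm

end Integrals

theorem laplacian_coe {N : ℕ} {F : Type*} [NormedAddCommGroup F] [NormedSpace ℝ F]
    (f : 𝓢(EuclideanSpace ℝ (Fin N), F)) :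
    laplacian ⇑f = ⇑(Δ f : 𝓢(EuclideanSpace ℝ (Fin N), F)) := by
  have hcoe : ∀ v, ⇑(∂_{v} f : 𝓢(EuclideanSpace ℝ (Fin N), F)) = fun y => fderiv ℝ f y v :=
    fun v => funext (lineDerivOp_apply_eq_fderiv v f)
  ext x
  simp [laplacian_eq_sum (EuclideanSpace.basisFun (Fin N) ℝ), laplacian, sum_apply,
    lineDerivOp_apply_eq_fderiv, hcoe]

end SchwartzMap

theorem hasDerivAt_sq_div_two_sub_mul_rpow_eq_zero {K σ x : ℝ} (hx : 0 < x) (hσ : σ ≠ 0)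
    (hK : K * x ^ σ = x ^ 2 / σ) : HasDerivAt (fun y => y ^ 2 / 2 - K * y ^ σ) 0 x := by
  have h : HasDerivAt (fun y => y ^ 2 / 2 - K * y ^ σ) (x - K * (σ * x ^ (σ - 1))) x := by
    simpa using ((hasDerivAt_pow 2 x).div_const 2).fun_sub
      ((Real.hasDerivAt_rpow_const (p := σ) (Or.inl hx.ne')).const_mul K)
  convert h using 1
  rw [Real.rpow_sub_one hx.ne', show K * (σ * (x ^ σ / x)) = σ * (K * x ^ σ) / x by ring, hK]
  field_simp
  ring

theorem rpow_neg_mul_rpow_neg_mul_rpow_eq_sq {m d β σ a : ℝ} (hm : 0 < m) (hd : 0 < d)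
    (h : β * (σ - 2) = a) : m ^ (-a) * d ^ (-(σ - 2)) * (m ^ β * d) ^ σ = (m ^ β * d) ^ 2 := by
  rw [Real.mul_rpow (by positivity) hd.le, ← Real.rpow_mul hm.le, mul_pow,
    ← Real.rpow_mul_natCast hm.le, ← Real.rpow_natCast d 2,
    show m ^ (-a) * d ^ (-(σ - 2)) * (m ^ (β * σ) * d ^ σ)
      = (m ^ (-a) * m ^ (β * σ)) * (d ^ (-(σ - 2)) * d ^ σ) by ring,
    ← Real.rpow_add hm, ← Real.rpow_add hd, ← h]
  congr 2 <;> push_cast <;> ring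

theorem sq_rpow_half_rpow_mul_rpow_half {t e : ℝ} (ht : 0 ≤ t) (he : 0 ≤ e) (β : ℝ) :
    ((t ^ (1 / 2 : ℝ)) ^ β * e ^ (1 / 2 : ℝ)) ^ 2 = t ^ β * e := by
  rw [mul_pow, ← Real.rpow_mul ht, ← Real.rpow_mul_natCast ht, ← Real.rpow_mul_natCast he,
    show 1 / 2 * β * ((2 : ℕ) : ℝ) = β by push_cast; ring,
    show 1 / 2 * ((2 : ℕ) : ℝ) = 1 by norm_num, Real.rpow_one]

theorem scaling_exponent_mul_sub_two {p σ s_c : ℝ} (hp : p - 1 ≠ 0) (hσ : σ - 2 ≠ 0)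
    (hs : s_c = 2 * (σ - 2) / (p - 1)) : (2 - s_c) / s_c * (σ - 2) = p + 1 - σ := by
  rw [hs]
  field_simp
  ring

theorem critical_point_of_f_general (N : ℕ) (hN : 1 ≤ N) (p : ℝ)
    (hp1 : 1 + 8 / (N : ℝ) < p)
    (s_c : ℝ) (hs : s_c = (N : ℝ) / 2 - 4 / (p - 1))
    (Q : SchwartzMap (EuclideanSpace ℝ (Fin N)) ℝ) (hQne : Q ≠ 0)
    (hQ : ∀ x, laplacian (laplacian (⇑Q)) x + (2 - s_c) * Q x - |Q x| ^ (p - 1) * Q x = 0)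
    (m d : ℝ)
    (hm : m = (∫ x, |Q x| ^ 2) ^ ((1 : ℝ) / 2))
    (hd : d = (∫ x, |laplacian (⇑Q) x| ^ 2) ^ ((1 : ℝ) / 2))
    (C_GN : ℝ)
    (hC : C_GN = (4 * (p + 1) / ((N : ℝ) * (p - 1))) *
        m ^ (-(p + 1 - (N : ℝ) * (p - 1) / 4)) * d ^ (-((N : ℝ) * (p - 1) / 4 - 2)))
    (f : ℝ → ℝ)
    (hf : ∀ x, f x = x ^ 2 / 2 - (C_GN / (p + 1)) * x ^ ((N : ℝ) * (p - 1) / 4))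
    (x₁ : ℝ) (hx₁ : x₁ = m ^ ((2 - s_c) / s_c) * d) :
    deriv f x₁ = 0 ∧
    f x₁ = ((∫ x, |Q x| ^ 2) ^ ((2 - s_c) / s_c)) *
        ((1 / 2) * (∫ x, |laplacian (⇑Q) x| ^ 2) - (1 / (p + 1)) * ∫ x, |Q x| ^ (p + 1)) ∧
    f x₁ = (((N : ℝ) * (p - 1) - 8) / (2 * (N : ℝ) * (p - 1))) * x₁ ^ 2 := by
  have hN0 : (0 : ℝ) < N := by exact_mod_cast hN
  have hp : 1 < p := by linarith [div_pos (by norm_num : (0 : ℝ) < 8) hN0]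
  have hp_sub : p - 1 ≠ 0 := by linarith
  set σ := (N : ℝ) * (p - 1) / 4 with hσ_def
  have hσ : 2 < σ := by linarith [(div_lt_iff₀' hN0).1 (by linarith : 8 / (N : ℝ) < p - 1)]
  set t := ∫ x, |Q x| ^ 2
  set e := ∫ x, |laplacian (⇑Q) x| ^ 2
  set u := ∫ x, |Q x| ^ (p + 1)
  have hpoh : N * (p - 1) * u = 4 * (p + 1) * e := by
    simpa [u, e, SchwartzMap.laplacian_coe, finrank_euclideanSpace_fin] using
      Q.pohozaev_identity (μ := volume) hp.le (c := 2 - s_c)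
        (by simpa [SchwartzMap.laplacian_coe] using hQ)
  have ht : 0 < t := by
    simpa [t, Real.rpow_two] using SchwartzMap.integral_abs_rpow_pos (μ := volume) hQne one_le_two
  have hu : 0 < u := SchwartzMap.integral_abs_rpow_pos hQne (by linarith)
  have he : 0 < e := by nlinarith
  have hm0 : 0 < m := hm ▸ Real.rpow_pos_of_pos ht _
  have hd0 : 0 < d := hd ▸ Real.rpow_pos_of_pos he _
  have hx₁0 : 0 < x₁ := hx₁ ▸ mul_pos (Real.rpow_pos_of_pos hm0 _) hd0
  have hβ : (2 - s_c) / s_c * (σ - 2) = p + 1 - σ :=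
    scaling_exponent_mul_sub_two hp_sub (by linarith) (by rw [hs, hσ_def]; field_simp; ring)
  have hK : C_GN / (p + 1) * x₁ ^ σ = x₁ ^ 2 / σ := by
    rw [hx₁, ← rpow_neg_mul_rpow_neg_mul_rpow_eq_sq hm0 hd0 hβ, hC,
      show 4 * (p + 1) / ((N : ℝ) * (p - 1)) = (p + 1) / σ by rw [hσ_def]; field_simp]
    field_simp
  have hval : f x₁ = (1 / 2 - 1 / σ) * x₁ ^ 2 := by rw [hf, hK]; ring
  refine ⟨?_, ?_, ?_⟩
  · rw [show f = _ from funext hf]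
    exact (hasDerivAt_sq_div_two_sub_mul_rpow_eq_zero hx₁0 (by positivity) hK).deriv
  · rw [hval, hx₁, hm, hd, sq_rpow_half_rpow_mul_rpow_half ht.le he.le]
    field_simp
    linear_combination (1 / 2 : ℝ) * hpoh
  · rw [hval, hσ_def]
    field_simp
    ring

/-- With `f(x) = x²/2 - (C_GN/(p+1)) x^{N(p-1)/4}` and
`x₁ = ‖Q‖_2^{(2-s_c)/s_c} ‖ΔQ‖_2`, one has `f'(x₁) = 0` and
`f(x₁) = M(Q)^{(2-s_c)/s_c} E(Q) = ((N(p-1)-8)/(2N(p-1))) x₁²`. -/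
theorem critical_point_of_f (N : ℕ) (hN : 1 ≤ N) (p : ℝ)
    (hp1 : 1 + 8 / (N : ℝ) < p) (hp2 : 5 ≤ N → p < 1 + 8 / ((N : ℝ) - 4))
    (s_c : ℝ) (hs : s_c = (N : ℝ) / 2 - 4 / (p - 1))
    (Q : SchwartzMap (EuclideanSpace ℝ (Fin N)) ℝ) (hQne : Q ≠ 0)
    (hQ : ∀ x, laplacian (laplacian (⇑Q)) x + (2 - s_c) * Q x - |Q x| ^ (p - 1) * Q x = 0)
    (m d : ℝ)
    (hm : m = (∫ x, |Q x| ^ 2) ^ ((1 : ℝ) / 2))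
    (hd : d = (∫ x, |laplacian (⇑Q) x| ^ 2) ^ ((1 : ℝ) / 2))
    (C_GN : ℝ)
    (hC : C_GN = (4 * (p + 1) / ((N : ℝ) * (p - 1))) *
        m ^ (-(p + 1 - (N : ℝ) * (p - 1) / 4)) * d ^ (-((N : ℝ) * (p - 1) / 4 - 2)))
    (f : ℝ → ℝ)
    (hf : ∀ x, f x = x ^ 2 / 2 - (C_GN / (p + 1)) * x ^ ((N : ℝ) * (p - 1) / 4))
    (x₁ : ℝ) (hx₁ : x₁ = m ^ ((2 - s_c) / s_c) * d) :
    deriv f x₁ = 0 ∧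
    f x₁ = ((∫ x, |Q x| ^ 2) ^ ((2 - s_c) / s_c)) *
        ((1 / 2) * (∫ x, |laplacian (⇑Q) x| ^ 2) - (1 / (p + 1)) * ∫ x, |Q x| ^ (p + 1)) ∧
    f x₁ = (((N : ℝ) * (p - 1) - 8) / (2 * (N : ℝ) * (p - 1))) * x₁ ^ 2 :=
  critical_point_of_f_general N hN p hp1 s_c hs Q hQne hQ m d hm hd C_GN hC f hf x₁ hx₁
end
end

section
/- Let N ≥ 1 be an integer, let p satisfy 1 + 8/N < p, and additionally p < 1 + 8/(N-4) when N ≥ 5; set s_c = N/2 - 4/(p-1) and q := N(p-1)/4 (so q > 2). Let A > 0 and B > 0 and define C_GN := (4(p+1)/(N(p-1))) A^{-(p+1-q)} B^{-(q-2)}. Let δ₀ ∈ (0,1). If nonnegative real numbers m, k, P satisfy P ≤ C_GN m^{p+1-q} k^q and m^{(2-s_c)/s_c} k ≤ (1-δ₀) A^{(2-s_c)/s_c} B, then k² - (N(p-1)/(4(p+1))) P ≥ (1 - (1-δ₀)^{q-2}) k². -/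
/-- Algebraic content of the coercivity lemma (Lemma 4.2). -/
theorem coercivity_algebraic (N : ℕ) (hN : 1 ≤ N) (p : ℝ)
    (hp1 : 1 + 8 / (N : ℝ) < p) (hp2 : 5 ≤ N → p < 1 + 8 / ((N : ℝ) - 4))
    (s_c q : ℝ) (hs : s_c = (N : ℝ) / 2 - 4 / (p - 1)) (hq : q = (N : ℝ) * (p - 1) / 4)
    (A B : ℝ) (hA : 0 < A) (hB : 0 < B)
    (C_GN : ℝ)
    (hC : C_GN = (4 * (p + 1) / ((N : ℝ) * (p - 1))) * A ^ (-(p + 1 - q)) * B ^ (-(q - 2)))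
    (δ₀ : ℝ) (hδ : δ₀ ∈ Set.Ioo (0 : ℝ) 1)
    (m k P : ℝ) (hm : 0 ≤ m) (hk : 0 ≤ k) (hP : 0 ≤ P)
    (h1 : P ≤ C_GN * m ^ (p + 1 - q) * k ^ q)
    (h2 : m ^ ((2 - s_c) / s_c) * k ≤ (1 - δ₀) * (A ^ ((2 - s_c) / s_c) * B)) :
    (1 - (1 - δ₀) ^ (q - 2)) * k ^ 2 ≤ k ^ 2 - ((N : ℝ) * (p - 1) / (4 * (p + 1))) * P := by
  obtain ⟨hδ0, hδ1⟩ := hδ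
  have hNpos : (0:ℝ) < N := by exact_mod_cast hN
  have hp1' : 1 < p := by
    have : 0 < 8 / (N:ℝ) := by positivity
    linarith
  have hq2 : 2 < q := by
    have h8 : 8 / (N:ℝ) < p - 1 := by linarith
    have h8' : 8 < (p - 1) * (N:ℝ) := (div_lt_iff₀ hNpos).mp h8
    rw [hq]; nlinarith
  have hqp : q < p + 1 := by
    rcases lt_or_ge (N:ℝ) 5 with h5 | h5
    · have hN5 : N < 5 := by exact_mod_cast h5
      have hN4 : (N:ℝ) ≤ 4 := by
        have : N ≤ 4 := by omega
        exact_mod_cast this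
      rw [hq, div_lt_iff₀ (by norm_num : (0:ℝ) < 4)]
      nlinarith
    · have h5' : 5 ≤ N := by exact_mod_cast h5
      have hp2' := hp2 h5'
      have hN4 : (0:ℝ) < (N:ℝ) - 4 := by linarith
      have h8 : p - 1 < 8 / ((N:ℝ) - 4) := by linarith
      have h8' : (p - 1) * ((N:ℝ) - 4) < 8 := (lt_div_iff₀ hN4).mp h8
      rw [hq, div_lt_iff₀ (by norm_num : (0:ℝ) < 4)]
      nlinarith
  have hp1ne : p - 1 ≠ 0 := by linarith
  have hsc : s_c = 2 * (q - 2) / (p - 1) := by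
    rw [hs, hq]; field_simp; ring
  have hscpos : 0 < s_c := by
    rw [hsc]; exact div_pos (by linarith) (by linarith)
  have hδ' : 0 < 1 - δ₀ := by linarith
  set e := (2 - s_c) / s_c with he_def
  have he : e * (q - 2) = p + 1 - q := by
    rw [he_def, div_mul_eq_mul_div, div_eq_iff (ne_of_gt hscpos), hsc]
    field_simp
    ring
  set X := p + 1 - q with hX
  set Y := q - 2 with hY
  have hXpos : 0 < X := by rw [hX]; linarith
  have hYpos : 0 < Y := by rw [hY]; linarith
  set c : ℝ := (N:ℝ) * (p - 1) / (4 * (p + 1)) with hc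
  have hcpos : 0 < c := by
    rw [hc]; exact div_pos (mul_pos hNpos (by linarith)) (by linarith)
  have hCc : c * C_GN = A ^ (-X) * B ^ (-Y) := by
    rw [hc, hC]
    field_simp
  -- raise h2 to the power q - 2
  have hmk : 0 ≤ m ^ e * k := by positivity
  have step2 : (m ^ e * k) ^ Y ≤ ((1 - δ₀) * (A ^ e * B)) ^ Y :=
    Real.rpow_le_rpow hmk h2 hYpos.le
  have hlhs : (m ^ e * k) ^ Y = m ^ X * k ^ Y := by
    rw [Real.mul_rpow (by positivity) hk, ← Real.rpow_mul hm, he]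
  have hrhs : ((1 - δ₀) * (A ^ e * B)) ^ Y
      = (1 - δ₀) ^ Y * (A ^ X * B ^ Y) := by
    rw [Real.mul_rpow hδ'.le (by positivity), Real.mul_rpow (by positivity) hB.le,
      ← Real.rpow_mul hA.le, he]
  rw [hlhs, hrhs] at step2
  have hA1 : A ^ (-X) * A ^ X = 1 := by
    rw [← Real.rpow_add hA, neg_add_cancel, Real.rpow_zero]
  have hB1 : B ^ (-Y) * B ^ Y = 1 := by
    rw [← Real.rpow_add hB, neg_add_cancel, Real.rpow_zero]
  rcases eq_or_lt_of_le hk with hk0 | hkpos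
  · -- k = 0
    have hk0' : k = 0 := hk0.symm
    have hkq : k ^ q = 0 := by
      rw [hk0']; exact Real.zero_rpow (by linarith)
    have hP0 : P = 0 := le_antisymm (by rw [hkq] at h1; simpa using h1) hP
    simp [hk0', hP0]
  · -- k > 0
    have hkq : k ^ q = k ^ Y * k ^ (2:ℕ) := by
      rw [← Real.rpow_natCast k 2, ← Real.rpow_add hkpos]
      norm_num [hY]
    have h3 : c * P ≤ (1 - δ₀) ^ Y * k ^ 2 :=
      calc c * P ≤ c * (C_GN * m ^ X * k ^ q) :=
            mul_le_mul_of_nonneg_left h1 hcpos.le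
        _ = (A ^ (-X) * B ^ (-Y)) * (m ^ X * k ^ Y) * k ^ 2 := by
            rw [hkq, ← hCc]; push_cast; ring
        _ ≤ (A ^ (-X) * B ^ (-Y)) * ((1 - δ₀) ^ Y * (A ^ X * B ^ Y)) * k ^ 2 := by
            apply mul_le_mul_of_nonneg_right
              (mul_le_mul_of_nonneg_left step2 (by positivity)) (sq_nonneg k)
        _ = (1 - δ₀) ^ Y * ((A ^ (-X) * A ^ X) * (B ^ (-Y) * B ^ Y)) * k ^ 2 := by
            ring
        _ = (1 - δ₀) ^ Y * k ^ 2 := by rw [hA1, hB1]; ring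
    have hexp : (1 - (1 - δ₀) ^ Y) * k ^ 2 = k ^ 2 - (1 - δ₀) ^ Y * k ^ 2 := by ring
    rw [hexp]
    linarith [h3]
end

section
/- Let N ≥ 1 be an integer, let p satisfy 1 + 8/N < p, and additionally p < 1 + 8/(N-4) when N ≥ 5; set s_c = N/2 - 4/(p-1) and q := N(p-1)/4 (so q > 2). Let A > 0 and B > 0 and define C_GN := (4(p+1)/(N(p-1))) A^{-(p+1-q)} B^{-(q-2)}. If nonnegative real numbers m, k, P satisfy P ≤ C_GN m^{p+1-q} k^q and m^{(2-s_c)/s_c} k ≤ A^{(2-s_c)/s_c} B, then ((N(p-1)-8)/(2N(p-1))) k² ≤ k²/2 - P/(p+1) ≤ k²/2. -/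
/-- Algebraic content of the comparability of kinetic and total energy (Lemma 4.3). -/
theorem energy_comparability_algebraic (N : ℕ) (hN : 1 ≤ N) (p : ℝ)
    (hp1 : 1 + 8 / (N : ℝ) < p) (hp2 : 5 ≤ N → p < 1 + 8 / ((N : ℝ) - 4))
    (s_c q : ℝ) (hs : s_c = (N : ℝ) / 2 - 4 / (p - 1)) (hq : q = (N : ℝ) * (p - 1) / 4)
    (A B : ℝ) (hA : 0 < A) (hB : 0 < B)
    (C_GN : ℝ)
    (hC : C_GN = (4 * (p + 1) / ((N : ℝ) * (p - 1))) * A ^ (-(p + 1 - q)) * B ^ (-(q - 2)))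
    (m k P : ℝ) (hm : 0 ≤ m) (hk : 0 ≤ k) (hP : 0 ≤ P)
    (h1 : P ≤ C_GN * m ^ (p + 1 - q) * k ^ q)
    (h2 : m ^ ((2 - s_c) / s_c) * k ≤ A ^ ((2 - s_c) / s_c) * B) :
    (((N : ℝ) * (p - 1) - 8) / (2 * (N : ℝ) * (p - 1))) * k ^ 2 ≤ k ^ 2 / 2 - P / (p + 1) ∧
    k ^ 2 / 2 - P / (p + 1) ≤ k ^ 2 / 2 := by
  have hNpos : (0:ℝ) < N := by exact_mod_cast hN
  have h8N : (0:ℝ) < 8 / N := by positivity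
  have hp1' : (1:ℝ) < p := by linarith
  have hpm1 : (0:ℝ) < p - 1 := by linarith
  have h8 : (8:ℝ) < N * (p - 1) := by
    have : 8 / (N:ℝ) < p - 1 := by linarith
    rw [div_lt_iff₀ hNpos] at this
    linarith [this]
  have hq2 : 2 < q := by rw [hq]; linarith
  have hy : (0:ℝ) < q - 2 := by linarith
  have hx : (0:ℝ) < p + 1 - q := by
    by_cases hN5 : 5 ≤ N
    · have hp2' := hp2 hN5
      have hN5' : (5:ℝ) ≤ N := by exact_mod_cast hN5
      have hN4 : (0:ℝ) < (N:ℝ) - 4 := by linarith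
      have : p - 1 < 8 / ((N:ℝ) - 4) := by linarith
      rw [lt_div_iff₀ hN4] at this
      rw [hq]; nlinarith
    · have hN4 : (N:ℝ) ≤ 4 := by
        have : N ≤ 4 := by omega
        exact_mod_cast this
      rw [hq]; nlinarith
  -- exponent identity
  have hsc : s_c = 2 * (q - 2) / (p - 1) := by
    rw [hs, hq]; field_simp; ring
  have hscpos : 0 < s_c := by rw [hsc]; positivity
  have hr2 : (2 - s_c) / s_c * (q - 2) = p + 1 - q := by
    rw [hsc]; field_simp; ring
  -- key product bound
  have hkey : m ^ (p + 1 - q) * k ^ (q - 2) ≤ A ^ (p + 1 - q) * B ^ (q - 2) := by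
    calc m ^ (p + 1 - q) * k ^ (q - 2)
        = (m ^ ((2 - s_c) / s_c)) ^ (q - 2) * k ^ (q - 2) := by
          rw [← Real.rpow_mul hm, hr2]
      _ = (m ^ ((2 - s_c) / s_c) * k) ^ (q - 2) :=
          (Real.mul_rpow (Real.rpow_nonneg hm _) hk).symm
      _ ≤ (A ^ ((2 - s_c) / s_c) * B) ^ (q - 2) :=
          Real.rpow_le_rpow (mul_nonneg (Real.rpow_nonneg hm _) hk) h2 hy.le
      _ = A ^ (p + 1 - q) * B ^ (q - 2) := by
          rw [Real.mul_rpow (Real.rpow_nonneg hA.le _) hB.le, ← Real.rpow_mul hA.le, hr2]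
  have hAx : (0:ℝ) < A ^ (p + 1 - q) := Real.rpow_pos_of_pos hA _
  have hBy : (0:ℝ) < B ^ (q - 2) := Real.rpow_pos_of_pos hB _
  have hCpos : 0 < C_GN := by
    rw [hC]
    have := Real.rpow_pos_of_pos hA (-(p+1-q))
    have := Real.rpow_pos_of_pos hB (-(q-2))
    positivity
  -- main bound : P ≤ (4*(p+1)/(N*(p-1))) * k^2
  have hP2 : P ≤ (4 * (p + 1) / ((N:ℝ) * (p - 1))) * k ^ 2 := by
    rcases eq_or_lt_of_le hk with hk0 | hkpos
    · have : k ^ q = 0 := by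
        rw [← hk0]; exact Real.zero_rpow (by linarith)
      have hle : P ≤ 0 := by
        calc P ≤ C_GN * m ^ (p + 1 - q) * k ^ q := h1
          _ = 0 := by rw [this]; ring
      have : (0:ℝ) ≤ (4 * (p + 1) / ((N:ℝ) * (p - 1))) * k ^ 2 := by positivity
      linarith
    rcases eq_or_lt_of_le hm with hm0 | hmpos
    · have : m ^ (p + 1 - q) = 0 := by
        rw [← hm0]; exact Real.zero_rpow (by linarith)
      have hle : P ≤ 0 := by
        calc P ≤ C_GN * m ^ (p + 1 - q) * k ^ q := h1
          _ = 0 := by rw [this]; ring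
      have : (0:ℝ) ≤ (4 * (p + 1) / ((N:ℝ) * (p - 1))) * k ^ 2 := by positivity
      linarith
    have hkq : k ^ q = k ^ (q - 2) * k ^ 2 := by
      have : k ^ q = k ^ (q - 2) * k ^ ((2:ℕ):ℝ) := by
        rw [← Real.rpow_add hkpos]; norm_num
      rwa [Real.rpow_natCast] at this
    have hmx : (0:ℝ) ≤ m ^ (p + 1 - q) := Real.rpow_nonneg hm _
    have hky : (0:ℝ) ≤ k ^ (q - 2) := Real.rpow_nonneg hk _
    have hk2 : (0:ℝ) ≤ k ^ 2 := by positivity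
    have hCval : C_GN = (4 * (p + 1) / ((N : ℝ) * (p - 1))) *
        (A ^ (p + 1 - q))⁻¹ * (B ^ (q - 2))⁻¹ := by
      rw [hC, Real.rpow_neg hA.le, Real.rpow_neg hB.le]
    have hc : (0:ℝ) < 4 * (p + 1) / ((N:ℝ) * (p - 1)) := by positivity
    calc P ≤ C_GN * m ^ (p + 1 - q) * k ^ q := h1
      _ = (4 * (p + 1) / ((N:ℝ) * (p - 1))) * (A ^ (p + 1 - q))⁻¹ * (B ^ (q - 2))⁻¹ *
          (m ^ (p + 1 - q) * k ^ (q - 2)) * k ^ 2 := by rw [hCval, hkq]; ring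
      _ ≤ (4 * (p + 1) / ((N:ℝ) * (p - 1))) * (A ^ (p + 1 - q))⁻¹ * (B ^ (q - 2))⁻¹ *
          (A ^ (p + 1 - q) * B ^ (q - 2)) * k ^ 2 := by
          apply mul_le_mul_of_nonneg_right _ hk2
          apply mul_le_mul_of_nonneg_left hkey
          positivity
      _ = (4 * (p + 1) / ((N:ℝ) * (p - 1))) * k ^ 2 := by
          field_simp
  -- conclude
  have hdiv : P / (p + 1) ≤ 4 / ((N:ℝ) * (p - 1)) * k ^ 2 := by
    rw [div_le_iff₀ (by linarith : (0:ℝ) < p + 1)]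
    calc P ≤ (4 * (p + 1) / ((N:ℝ) * (p - 1))) * k ^ 2 := hP2
      _ = 4 / ((N:ℝ) * (p - 1)) * k ^ 2 * (p + 1) := by field_simp
  have hPd : 0 ≤ P / (p + 1) := div_nonneg hP (by linarith)
  constructor
  · have heq : ((N:ℝ) * (p - 1) - 8) / (2 * (N:ℝ) * (p - 1)) * k ^ 2 =
        k ^ 2 / 2 - 4 / ((N:ℝ) * (p - 1)) * k ^ 2 := by
      field_simp
      ring
    rw [heq]
    linarith [hdiv]
  · linarith [hPd]
end

section
/- Let p ≥ 2 be a real number and M ≥ 1 an integer. There exists a constant c = c(M, p) > 0 such that for all complex numbers z_1, …, z_M one has | |Σ_{j=1}^M z_j|^{p-1}(Σ_{j=1}^M z_j) - Σ_{j=1}^M |z_j|^{p-1} z_j | ≤ c Σ_{j ≠ k} |z_j| |z_k| (|z_j|^{p-2} + |z_k|^{p-2}), where the last sum runs over all ordered pairs (j,k) with 1 ≤ j, k ≤ M and j ≠ k. -/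
/-!
Let `z m` be a profile of largest modulus, `B = ‖z m‖` and `A = ∑_{j ≠ m} ‖z j‖`. The map
`F w = ‖w‖^s • w` (`s = p - 1 ≥ 1`) satisfies `‖F u - F v‖ ≤ (s + 1) R^s ‖u - v‖` on the ball of
radius `R`, so replacing `F (∑ j, z j)` by `F (z m)` costs at most `p (M B)^(p-1) A`, while each
remaining `F (z j)` has norm at most `B^(p-1) ‖z j‖`. The error is therefore `O(B^(p-1) A)`, and
`B^(p-1) A` is dominated by the row `j = m` of the cross-term sum.
-/
open Finset

theorem Real.abs_rpow_sub_rpow_le {s x y R : ℝ} (hs : 1 ≤ s) (hx : 0 ≤ x) (hy : 0 ≤ y)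
    (hxR : x ≤ R) (hyR : y ≤ R) : |x ^ s - y ^ s| ≤ s * R ^ (s - 1) * |x - y| := by
  have hderiv : ∀ t ∈ Set.Icc 0 R, ‖deriv (fun t : ℝ => t ^ s) t‖ ≤ s * R ^ (s - 1) := by
    rintro t ⟨ht0, htR⟩
    rw [Real.deriv_rpow_const, Real.norm_eq_abs, abs_of_nonneg (by positivity)]
    gcongr
  simpa only [Real.norm_eq_abs] using (convex_Icc 0 R).norm_image_sub_le_of_norm_deriv_le
    (fun t _ => Real.differentiable_rpow_const hs t) hderiv ⟨hy, hyR⟩ ⟨hx, hxR⟩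

section PowerNonlinearity

variable {E : Type*} [NormedAddCommGroup E] [NormedSpace ℝ E] {s : ℝ}

theorem norm_rpow_smul_le {w : E} {B : ℝ} (hs : 0 ≤ s) (hwB : ‖w‖ ≤ B) :
    ‖‖w‖ ^ s • w‖ ≤ B ^ s * ‖w‖ := by
  rw [norm_smul, Real.norm_eq_abs, abs_of_nonneg (by positivity)]
  gcongr

theorem norm_rpow_smul_sub_rpow_smul_le (hs : 1 ≤ s) {u v : E} {R : ℝ} (huR : ‖u‖ ≤ R)
    (hvR : ‖v‖ ≤ R) : ‖‖u‖ ^ s • u - ‖v‖ ^ s • v‖ ≤ (s + 1) * R ^ s * ‖u - v‖ := by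
  have hR : 0 ≤ R := (norm_nonneg u).trans huR
  have hsplit : ‖u‖ ^ s • u - ‖v‖ ^ s • v = ‖u‖ ^ s • (u - v) + (‖u‖ ^ s - ‖v‖ ^ s) • v := by
    rw [smul_sub, sub_smul]; abel
  have hdiff : |‖u‖ ^ s - ‖v‖ ^ s| ≤ s * R ^ (s - 1) * ‖u - v‖ :=
    (Real.abs_rpow_sub_rpow_le hs (norm_nonneg u) (norm_nonneg v) huR hvR).trans
      (by gcongr; exact abs_norm_sub_norm_le u v)
  calc ‖‖u‖ ^ s • u - ‖v‖ ^ s • v‖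
      ≤ ‖u‖ ^ s * ‖u - v‖ + |‖u‖ ^ s - ‖v‖ ^ s| * ‖v‖ := by
        rw [hsplit, ← Real.norm_eq_abs, ← norm_smul]
        refine (norm_add_le _ _).trans ?_
        rw [norm_smul, Real.norm_eq_abs, abs_of_nonneg (by positivity)]
    _ ≤ R ^ s * ‖u - v‖ + s * R ^ (s - 1) * ‖u - v‖ * R := by gcongr
    _ = (s + 1) * R ^ s * ‖u - v‖ := by
        have hpow : R ^ (s - 1) * R = R ^ s := by
          rw [← Real.rpow_add_one' hR (by linarith), sub_add_cancel]
        linear_combination s * ‖u - v‖ * hpow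

variable {ι : Type*} [Fintype ι] [DecidableEq ι]

theorem norm_rpow_smul_sum_sub_sum_le (hs : 1 ≤ s) (z : ι → E) {m : ι}
    (hmax : ∀ j, ‖z j‖ ≤ ‖z m‖) :
    ‖‖∑ j, z j‖ ^ s • ∑ j, z j - ∑ j, ‖z j‖ ^ s • z j‖ ≤
      ((s + 1) * (Fintype.card ι : ℝ) ^ s + 1) * ‖z m‖ ^ s * ∑ j ∈ univ.erase m, ‖z j‖ := by
  set B := ‖z m‖
  set A := ∑ j ∈ univ.erase m, ‖z j‖
  set N : ℝ := (Fintype.card ι : ℝ)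
  have hN : 1 ≤ N := Nat.one_le_cast.2 (Fintype.card_pos_iff.2 ⟨m⟩)
  have hsum : ∑ j, z j = z m + ∑ j ∈ univ.erase m, z j := (add_sum_erase _ z (mem_univ m)).symm
  have hsumB : ‖∑ j, z j‖ ≤ N * B := by
    simpa [N] using (norm_sum_le _ _).trans (sum_le_card_nsmul univ _ B fun j _ => hmax j)
  have hmB : B ≤ N * B := le_mul_of_one_le_left (norm_nonneg _) hN
  have hhead : ‖‖∑ j, z j‖ ^ s • ∑ j, z j - ‖z m‖ ^ s • z m‖ ≤ (s + 1) * (N * B) ^ s * A := by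
    refine (norm_rpow_smul_sub_rpow_smul_le hs hsumB hmB).trans ?_
    rw [hsum, add_sub_cancel_left]
    gcongr
    exact norm_sum_le _ _
  have htail : ‖∑ j ∈ univ.erase m, ‖z j‖ ^ s • z j‖ ≤ B ^ s * A := by
    rw [mul_sum]
    exact (norm_sum_le _ _).trans
      (sum_le_sum fun j _ => norm_rpow_smul_le (by linarith) (hmax j))
  calc ‖‖∑ j, z j‖ ^ s • ∑ j, z j - ∑ j, ‖z j‖ ^ s • z j‖
      = ‖(‖∑ j, z j‖ ^ s • ∑ j, z j - ‖z m‖ ^ s • z m)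
          - ∑ j ∈ univ.erase m, ‖z j‖ ^ s • z j‖ := by
        rw [← add_sum_erase univ (fun j => ‖z j‖ ^ s • z j) (mem_univ m), sub_add_eq_sub_sub]
    _ ≤ (s + 1) * (N * B) ^ s * A + B ^ s * A := norm_sub_le_of_le hhead htail
    _ = ((s + 1) * N ^ s + 1) * B ^ s * A := by
        rw [Real.mul_rpow (by linarith) (norm_nonneg _)]; ring

end PowerNonlinearity

section CrossTerms

variable {ι : Type*} [Fintype ι] [DecidableEq ι]

noncomputable def crossTerms (p : ℝ) (a : ι → ℝ) : ℝ :=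
  ∑ j, ∑ k, if j = k then 0 else a j * a k * (a j ^ (p - 2) + a k ^ (p - 2))

theorem rpow_mul_sum_erase_le_crossTerms {p : ℝ} (hp : p ≠ 1) {a : ι → ℝ} (ha : ∀ j, 0 ≤ a j)
    (m : ι) : a m ^ (p - 1) * ∑ k ∈ univ.erase m, a k ≤ crossTerms p a := by
  have hterm : ∀ j k, 0 ≤ if j = k then 0 else a j * a k * (a j ^ (p - 2) + a k ^ (p - 2)) := by
    intro j k
    split_ifs
    · exact le_rfl
    · have := ha j; have := ha k; positivity
  calc a m ^ (p - 1) * ∑ k ∈ univ.erase m, a k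
      ≤ ∑ k ∈ univ.erase m, a m * a k * (a m ^ (p - 2) + a k ^ (p - 2)) := by
        rw [mul_sum]
        refine sum_le_sum fun k _ => ?_
        have hpow : a m ^ (p - 1) = a m ^ (p - 2) * a m := by
          rw [← Real.rpow_add_one' (ha m) (by contrapose! hp; linarith)]; ring_nf
        rw [hpow]
        have := mul_nonneg (mul_nonneg (ha m) (ha k)) (Real.rpow_nonneg (ha k) (p - 2))
        linarith
    _ = ∑ k, if m = k then 0 else a m * a k * (a m ^ (p - 2) + a k ^ (p - 2)) := by
        rw [sum_ite, sum_const_zero, zero_add, filter_ne]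
    _ ≤ crossTerms p a := single_le_sum (fun j _ => sum_nonneg fun k _ => hterm j k) (mem_univ m)

end CrossTerms

/-- Pointwise estimate on the nonlinearity `F(z) = |z|^{p-1}z` applied to a sum of
profiles, in the case `p ≥ 2`. -/
theorem nonlinearity_cross_terms_large_p (p : ℝ) (hp : 2 ≤ p) (M : ℕ) (hM : 1 ≤ M) :
    ∃ c : ℝ, 0 < c ∧ ∀ z : Fin M → ℂ,
      ‖((‖∑ j, z j‖ ^ (p - 1) : ℝ) : ℂ) * (∑ j, z j)
          - ∑ j, ((‖z j‖ ^ (p - 1) : ℝ) : ℂ) * z j‖ ≤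
        c * ∑ j, ∑ k, if j = k then 0 else
          ‖z j‖ * ‖z k‖ * (‖z j‖ ^ (p - 2) + ‖z k‖ ^ (p - 2)) := by
  refine ⟨p * (M : ℝ) ^ (p - 1) + 1, by positivity, fun z => ?_⟩
  obtain ⟨m, -, hmax⟩ := exists_max_image univ (fun j => ‖z j‖) ⟨⟨0, hM⟩, mem_univ _⟩
  have hbound := norm_rpow_smul_sum_sub_sum_le (s := p - 1) (by linarith) z
    (fun j => hmax j (mem_univ j))
  simp only [Complex.real_smul, Fintype.card_fin, sub_add_cancel] at hbound
  refine hbound.trans ?_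
  change _ ≤ _ * crossTerms p (fun j => ‖z j‖)
  rw [mul_assoc]
  gcongr
  exact rpow_mul_sum_erase_le_crossTerms (by linarith) (fun j => norm_nonneg _) m
end

section
/- Let 1 < p ≤ 2 be a real number and M ≥ 1 an integer. There exists a constant c = c(M, p) > 0 such that for all complex numbers z_1, …, z_M one has | |Σ_{j=1}^M z_j|^{p-1}(Σ_{j=1}^M z_j) - Σ_{j=1}^M |z_j|^{p-1} z_j | ≤ c Σ_{j ≠ k} |z_j| |z_k|^{p-1}, where the sum runs over all ordered pairs (j,k) with 1 ≤ j, k ≤ M and j ≠ k. -/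
open NNReal in
/-- Subadditivity of `x ↦ x ^ s` on nonnegative reals for `0 ≤ s ≤ 1`. -/
lemma real_rpow_add_le_add_rpow {a b s : ℝ} (ha : 0 ≤ a) (hb : 0 ≤ b)
    (hs0 : 0 ≤ s) (hs1 : s ≤ 1) : (a + b) ^ s ≤ a ^ s + b ^ s := by
  have := NNReal.rpow_add_le_add_rpow (⟨a, ha⟩ : ℝ≥0) (⟨b, hb⟩ : ℝ≥0) hs0 hs1
  have h' := NNReal.coe_le_coe.2 this
  push_cast [NNReal.coe_rpow] at h'
  exact h'

/-- `|a^s - b^s| ≤ |a - b|^s` for nonnegative `a, b` and `0 ≤ s ≤ 1`. -/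
lemma abs_rpow_sub_rpow_le {a b s : ℝ} (ha : 0 ≤ a) (hb : 0 ≤ b)
    (hs0 : 0 ≤ s) (hs1 : s ≤ 1) : |a ^ s - b ^ s| ≤ |a - b| ^ s := by
  have key : ∀ x y : ℝ, 0 ≤ x → 0 ≤ y → y ≤ x → x ^ s - y ^ s ≤ (x - y) ^ s := by
    intro x y hx hy hxy
    have h1 : x ^ s ≤ (x - y) ^ s + y ^ s := by
      have := real_rpow_add_le_add_rpow (sub_nonneg.2 hxy) hy hs0 hs1
      simpa [sub_add_cancel] using this
    linarith
  rcases le_total b a with h | h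
  · rw [abs_of_nonneg (sub_nonneg.2 h),
      abs_of_nonneg (sub_nonneg.2 (Real.rpow_le_rpow hb h hs0))]
    exact key a b ha hb h
  · rw [abs_sub_comm a b, abs_sub_comm (a ^ s) (b ^ s), abs_of_nonneg (sub_nonneg.2 h),
      abs_of_nonneg (sub_nonneg.2 (Real.rpow_le_rpow ha h hs0))]
    exact key b a hb ha h

/-- Subadditivity of `x ↦ x ^ s` over finite sums, for `0 < s ≤ 1`. -/
lemma rpow_sum_le_sum_rpow {ι : Type*} (t : Finset ι) (f : ι → ℝ)
    (hf : ∀ i ∈ t, 0 ≤ f i) {s : ℝ} (hs0 : 0 < s) (hs1 : s ≤ 1) :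
    (∑ i ∈ t, f i) ^ s ≤ ∑ i ∈ t, f i ^ s := by
  classical
  induction t using Finset.induction with
  | empty => simp [Real.zero_rpow hs0.ne']
  | @insert a u hx ih =>
    rw [Finset.sum_insert hx, Finset.sum_insert hx]
    have h1 : (f a + ∑ i ∈ u, f i) ^ s ≤ f a ^ s + (∑ i ∈ u, f i) ^ s :=
      real_rpow_add_le_add_rpow (hf a (Finset.mem_insert_self a u))
        (Finset.sum_nonneg fun i hi => hf i (Finset.mem_insert_of_mem hi)) hs0.le hs1
    have h2 := ih (fun i hi => hf i (Finset.mem_insert_of_mem hi))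
    linarith

/-- Pointwise estimate on the nonlinearity `F(z) = |z|^{p-1}z` applied to a sum of
profiles, in the case `1 < p ≤ 2`. -/
theorem nonlinearity_cross_terms_small_p (p : ℝ) (hp1 : 1 < p) (hp2 : p ≤ 2)
    (M : ℕ) (hM : 1 ≤ M) :
    ∃ c : ℝ, 0 < c ∧ ∀ z : Fin M → ℂ,
      ‖((‖∑ j, z j‖ ^ (p - 1) : ℝ) : ℂ) * (∑ j, z j)
          - ∑ j, ((‖z j‖ ^ (p - 1) : ℝ) : ℂ) * z j‖ ≤
        c * ∑ j, ∑ k, if j = k then 0 else ‖z j‖ * ‖z k‖ ^ (p - 1) := by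
  classical
  refine ⟨1, one_pos, fun z => ?_⟩
  set s : ℝ := p - 1 with hs_def
  have hs0 : 0 < s := by simp only [hs_def]; linarith
  have hs1 : s ≤ 1 := by simp only [hs_def]; linarith
  set S : ℂ := ∑ j, z j with hS
  have key : ((‖S‖ ^ s : ℝ) : ℂ) * S - ∑ j, ((‖z j‖ ^ s : ℝ) : ℂ) * z j
      = ∑ j, (((‖S‖ ^ s - ‖z j‖ ^ s : ℝ)) : ℂ) * z j := by
    rw [hS, Finset.mul_sum, ← Finset.sum_sub_distrib]
    refine Finset.sum_congr rfl fun j _ => ?_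
    push_cast
    ring
  rw [key, one_mul]
  calc ‖∑ j, (((‖S‖ ^ s - ‖z j‖ ^ s : ℝ)) : ℂ) * z j‖
      ≤ ∑ j, ‖(((‖S‖ ^ s - ‖z j‖ ^ s : ℝ)) : ℂ) * z j‖ := norm_sum_le _ _
    _ ≤ ∑ j, ∑ k, if j = k then 0 else ‖z j‖ * ‖z k‖ ^ s := by
        refine Finset.sum_le_sum fun j _ => ?_
        rw [norm_mul, Complex.norm_real, Real.norm_eq_abs]
        have h1 : |‖S‖ ^ s - ‖z j‖ ^ s| ≤ |‖S‖ - ‖z j‖| ^ s :=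
          abs_rpow_sub_rpow_le (norm_nonneg _) (norm_nonneg _) hs0.le hs1
        have h2 : |‖S‖ - ‖z j‖| ≤ ‖S - z j‖ := abs_norm_sub_norm_le _ _
        have hSz : S - z j = ∑ k ∈ Finset.univ.erase j, z k := by
          rw [Finset.sum_erase_eq_sub (Finset.mem_univ j), ← hS]
        have h3 : ‖S - z j‖ ≤ ∑ k ∈ Finset.univ.erase j, ‖z k‖ := by
          rw [hSz]; exact norm_sum_le _ _
        have h4 : |‖S‖ ^ s - ‖z j‖ ^ s| ≤ (∑ k ∈ Finset.univ.erase j, ‖z k‖) ^ s :=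
          h1.trans (Real.rpow_le_rpow (abs_nonneg _) (h2.trans h3) hs0.le)
        have h5 : (∑ k ∈ Finset.univ.erase j, ‖z k‖) ^ s
            ≤ ∑ k ∈ Finset.univ.erase j, ‖z k‖ ^ s :=
          rpow_sum_le_sum_rpow _ _ (fun i _ => norm_nonneg _) hs0 hs1
        have h6 : |‖S‖ ^ s - ‖z j‖ ^ s| * ‖z j‖
            ≤ (∑ k ∈ Finset.univ.erase j, ‖z k‖ ^ s) * ‖z j‖ :=
          mul_le_mul_of_nonneg_right (h4.trans h5) (norm_nonneg _)
        refine h6.trans_eq ?_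
        rw [Finset.sum_mul]
        have heq : (∑ k, if j = k then (0:ℝ) else ‖z j‖ * ‖z k‖ ^ s)
            = ∑ k ∈ Finset.univ.erase j,
                (if j = k then (0:ℝ) else ‖z j‖ * ‖z k‖ ^ s) :=
          (Finset.sum_erase Finset.univ (by simp)).symm
        rw [heq]
        refine Finset.sum_congr rfl fun k hk => ?_
        have hne : j ≠ k := (Finset.ne_of_mem_erase hk).symm
        simp [hne, mul_comm]
end

section
/- Let N ≥ 1 be an integer and p > 1. For every Schwartz function u : ℝ^N → ℂ, the following integration-by-parts identity holds: Re ∫_{ℝ^N} (x · ∇ū(x)) |u(x)|^{p-1} u(x) dx = -(N/(p+1)) ∫_{ℝ^N} |u(x)|^{p+1} dx. -/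
/-!
Write `F = |u|^{p+1}`. Since `d(|z|^{p+1}) = (p+1)|z|^{p-1} Re(z̄ dz)`, the real part of the
integrand is `(p+1)⁻¹ (x · ∇F)`. Expanding `x` in a basis and integrating by parts in each
coordinate gives the Euler-type identity `∫ x · ∇F = -N ∫ F`, valid for any `C¹` function `F`
with `F`, `|x| F` and `|x| |∇F|` integrable; for a Schwartz function `u` these follow from the
boundedness of `u` and the decay of `u` and `∇u`.
-/

open MeasureTheory Module

section IntegralFDerivApplySelf

variable {E G : Type*} [NormedAddCommGroup E] [NormedSpace ℝ E] [FiniteDimensional ℝ E]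
  [MeasurableSpace E] [BorelSpace E] [NormedAddCommGroup G] [NormedSpace ℝ G]

theorem integral_fderiv_apply_self_eq_neg_finrank_smul (μ : Measure E) [μ.IsAddHaarMeasure]
    {f : E → G} (hf : ContDiff ℝ 1 f) (hfi : Integrable f μ)
    (hxf : Integrable (fun x ↦ ‖x‖ * ‖f x‖) μ)
    (hxf' : Integrable (fun x ↦ ‖x‖ * ‖fderiv ℝ f x‖) μ) :
    ∫ x, fderiv ℝ f x x ∂μ = -(finrank ℝ E : ℝ) • ∫ x, f x ∂μ := by
  let b := finBasis ℝ E
  let c : Fin (finrank ℝ E) → E →L[ℝ] ℝ := fun i ↦ (b.coord i).toContinuousLinearMap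
  have hcb : ∀ i, c i (b i) = 1 := fun i ↦ by simp [c]
  have hexpand : ∀ x, fderiv ℝ f x x = ∑ i, c i x • fderiv ℝ f x (b i) := fun x ↦ by
    nth_rewrite 2 [← b.sum_repr x]
    simp only [map_sum, map_smul, c, LinearMap.coe_toContinuousLinearMap', Basis.coord_apply]
  have hterm_int : ∀ i, Integrable (fun x ↦ c i x • fderiv ℝ f x (b i)) μ := fun i ↦ by
    have hcont := (hf.continuous_fderiv one_ne_zero).clm_apply (continuous_const (y := b i))
    refine (hxf'.const_mul (‖c i‖ * ‖b i‖)).mono'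
      ((c i).continuous.smul hcont).aestronglyMeasurable (ae_of_all _ fun x ↦ ?_)
    calc ‖c i x • fderiv ℝ f x (b i)‖ ≤ (‖c i‖ * ‖x‖) * (‖fderiv ℝ f x‖ * ‖b i‖) := by
          rw [norm_smul]
          gcongr
          exacts [(c i).le_opNorm x, (fderiv ℝ f x).le_opNorm (b i)]
      _ = ‖c i‖ * ‖b i‖ * (‖x‖ * ‖fderiv ℝ f x‖) := by ring
  have hibp : ∀ i, ∫ x, c i x • fderiv ℝ f x (b i) ∂μ = -∫ x, f x ∂μ := fun i ↦ by
    have hcf : Integrable (fun x ↦ c i x • f x) μ := by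
      refine (hxf.const_mul ‖c i‖).mono' ((c i).continuous.aestronglyMeasurable.smul
        hfi.aestronglyMeasurable) (ae_of_all _ fun x ↦ ?_)
      rw [norm_smul, ← mul_assoc]
      gcongr
      exact (c i).le_opNorm x
    simpa [(c i).fderiv, hcb] using
      integral_smul_fderiv_eq_neg_fderiv_smul_of_integrable (μ := μ) (v := b i)
        (by simpa [(c i).fderiv, hcb] using hfi) (hterm_int i) hcf
        (fun x _ ↦ (c i).differentiableAt) (fun x _ ↦ hf.differentiable one_ne_zero x)
  rw [integral_congr_ae (ae_of_all _ hexpand), integral_finsetSum _ fun i _ ↦ hterm_int i]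
  simp [hibp, Nat.cast_smul_eq_nsmul]

end IntegralFDerivApplySelf

theorem re_conj_fderiv_mul_norm_rpow_mul {D : Type*} [NormedAddCommGroup D] [NormedSpace ℝ D]
    {u : D → ℂ} (hu : Differentiable ℝ u) {p : ℝ} (hp : 0 < p) (x v : D) :
    (starRingEnd ℂ (fderiv ℝ u x v) * ((‖u x‖ ^ (p - 1) : ℝ) : ℂ) * u x).re
      = (p + 1)⁻¹ * fderiv ℝ (fun y ↦ ‖u y‖ ^ (p + 1)) x v := by
  rw [hu.fderiv_norm_rpow (by linarith), show p + 1 - 2 = p - 1 by ring]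
  simp only [FunLike.coe_smul, Pi.smul_apply, ContinuousLinearMap.comp_apply,
    innerSL_apply_apply, Complex.inner, smul_eq_mul, Complex.mul_re, Complex.mul_im,
    Complex.conj_re, Complex.conj_im, Complex.ofReal_re, Complex.ofReal_im]
  field_simp
  ring

namespace SchwartzMap

variable {D : Type*} [NormedAddCommGroup D] [NormedSpace ℝ D] [MeasurableSpace D] [BorelSpace D]
  [SecondCountableTopology D] (μ : Measure D) [μ.HasTemperateGrowth]

theorem integrable_pow_mul_norm_rpow {V : Type*} [NormedAddCommGroup V] [NormedSpace ℝ V]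
    (u : 𝓢(D, V)) (k : ℕ) {q : ℝ} (hq : 1 ≤ q) :
    Integrable (fun x ↦ ‖x‖ ^ k * ‖u x‖ ^ q) μ := by
  refine ((u.integrable_pow_mul μ k).const_mul (SchwartzMap.seminorm ℝ 0 0 u ^ (q - 1))).mono'
    (by fun_prop (disch := linarith)) (ae_of_all _ fun x ↦ ?_)
  rw [Real.norm_of_nonneg (by positivity), ← sub_add_cancel q 1,
    Real.rpow_add_one' (norm_nonneg _) (by linarith), add_sub_cancel_right]
  calc ‖x‖ ^ k * (‖u x‖ ^ (q - 1) * ‖u x‖)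
      ≤ ‖x‖ ^ k * (SchwartzMap.seminorm ℝ 0 0 u ^ (q - 1) * ‖u x‖) := by
        gcongr
        exact u.norm_le_seminorm ℝ x
    _ = _ := by ring

theorem integrable_norm_mul_norm_fderiv {V : Type*} [NormedAddCommGroup V] [NormedSpace ℝ V]
    (u : 𝓢(D, V)) : Integrable (fun x ↦ ‖x‖ * ‖fderiv ℝ u x‖) μ := by
  simpa using (fderivCLM ℝ D V u).integrable_pow_mul μ 1

theorem integrable_norm_mul_norm_fderiv_norm_rpow {W : Type*} [NormedAddCommGroup W]
    [InnerProductSpace ℝ W] (u : 𝓢(D, W)) {q : ℝ} (hq : 1 < q) :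
    Integrable (fun x ↦ ‖x‖ * ‖fderiv ℝ (fun y ↦ ‖u y‖ ^ q) x‖) μ := by
  have hcont := ((u.smooth 1).norm_rpow hq).continuous_fderiv one_ne_zero
  refine ((u.integrable_norm_mul_norm_fderiv μ).const_mul
    (q * SchwartzMap.seminorm ℝ 0 0 u ^ (q - 1))).mono' (by fun_prop) (ae_of_all _ fun x ↦ ?_)
  rw [Real.norm_of_nonneg (by positivity)]
  calc ‖x‖ * ‖fderiv ℝ (fun y ↦ ‖u y‖ ^ q) x‖
      ≤ ‖x‖ * (q * ‖u x‖ ^ (q - 1) * ‖fderiv ℝ u x‖) := by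
        gcongr
        exact norm_fderiv_norm_rpow_le u.differentiable hq
    _ ≤ ‖x‖ * (q * SchwartzMap.seminorm ℝ 0 0 u ^ (q - 1) * ‖fderiv ℝ u x‖) := by
        gcongr
        exact u.norm_le_seminorm ℝ x
    _ = _ := by ring

theorem integrable_conj_fderiv_apply_self_mul_norm_rpow_mul (u : 𝓢(D, ℂ)) {p : ℝ}
    (hp : 1 ≤ p) :
    Integrable
      (fun x ↦ starRingEnd ℂ (fderiv ℝ u x x) * ((‖u x‖ ^ (p - 1) : ℝ) : ℂ) * u x) μ := by
  have hcont : Continuous (fderiv ℝ u) := (u.smooth 1).continuous_fderiv one_ne_zero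
  refine ((u.integrable_norm_mul_norm_fderiv μ).const_mul
    (SchwartzMap.seminorm ℝ 0 0 u ^ (p - 1) * SchwartzMap.seminorm ℝ 0 0 u)).mono'
    (by fun_prop (disch := linarith)) (ae_of_all _ fun x ↦ ?_)
  rw [norm_mul, norm_mul, RCLike.norm_conj, Complex.norm_real,
    Real.norm_of_nonneg (by positivity)]
  calc ‖fderiv ℝ u x x‖ * ‖u x‖ ^ (p - 1) * ‖u x‖
      ≤ (‖fderiv ℝ u x‖ * ‖x‖) * SchwartzMap.seminorm ℝ 0 0 u ^ (p - 1)
          * SchwartzMap.seminorm ℝ 0 0 u := by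
        gcongr
        · exact (fderiv ℝ u x).le_opNorm x
        all_goals exact u.norm_le_seminorm ℝ x
    _ = _ := by ring

end SchwartzMap

theorem nonlinearity_virial_identity_general (N : ℕ) (p : ℝ) (hp : 1 < p)
    (u : SchwartzMap (EuclideanSpace ℝ (Fin N)) ℂ) :
    (∫ x, (starRingEnd ℂ) (fderiv ℝ (⇑u) x x) * ((‖u x‖ ^ (p - 1) : ℝ) : ℂ) * u x).re
      = -((N : ℝ) / (p + 1)) * ∫ x, ‖u x‖ ^ (p + 1) := by
  have hp1 : 1 < p + 1 := by linarith
  have hEuler : ∫ x, fderiv ℝ (fun y ↦ ‖u y‖ ^ (p + 1)) x x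
      = -(N : ℝ) * ∫ x, ‖u x‖ ^ (p + 1) := by
    simpa using integral_fderiv_apply_self_eq_neg_finrank_smul volume
      ((u.smooth 1).norm_rpow hp1)
      (by simpa using u.integrable_pow_mul_norm_rpow volume 0 hp1.le)
      (by simpa [abs_of_nonneg, Real.rpow_nonneg] using
        u.integrable_pow_mul_norm_rpow volume 1 hp1.le)
      (u.integrable_norm_mul_norm_fderiv_norm_rpow volume hp1)
  rw [← RCLike.re_to_complex,
    ← integral_re (u.integrable_conj_fderiv_apply_self_mul_norm_rpow_mul volume hp.le)]
  simp_rw [RCLike.re_to_complex,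
    re_conj_fderiv_mul_norm_rpow_mul u.differentiable (by linarith : 0 < p)]
  rw [integral_const_mul, hEuler]
  field_simp

/-- Virial identity for the nonlinearity:
`Re ∫ (x·∇ū) |u|^{p-1}u dx = -(N/(p+1)) ∫ |u|^{p+1} dx`. -/
theorem nonlinearity_virial_identity (N : ℕ) (hN : 1 ≤ N) (p : ℝ) (hp : 1 < p)
    (u : SchwartzMap (EuclideanSpace ℝ (Fin N)) ℂ) :
    (∫ x, (starRingEnd ℂ) (fderiv ℝ (⇑u) x x) * ((‖u x‖ ^ (p - 1) : ℝ) : ℂ) * u x).re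
      = -((N : ℝ) / (p + 1)) * ∫ x, ‖u x‖ ^ (p + 1) :=
  nonlinearity_virial_identity_general N p hp u
end
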